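/- arXiv:2206.08556 — 12 statements merged into one kernel-verified Lean document; each statement's English description precedes it below -/
import Mathlib

section
/- Let T ≥ 1, M ≥ 1 and k ≥ 1 be integers and let δ ∈ (0,1]. Let (F_t)_{t∈ℕ} be a filtration on a probability space, let (Z_t)_{t∈ℕ} be an adapted real-valued process with Z_0 = 0, and let (N_t)_{t∈ℕ} be an adapted ℕ-valued nondecreasing process with N_0 = 0 such that |Z_t| ≤ N_t almost surely for every t. Suppose that for every λ > 0 the process W_t(λ) = exp(λ·Z_t − N_t·λ²/8) is a supermartingale with respect to (F_t). Let τ be a stopping time with τ ≤ T + 1 almost surely, and suppose that almost surely on the event {τ ≤ T} one has k ≤ N_τ ≤ k + M. Then P( {τ ≤ T} ∩ { Z_τ ≥ N_τ · √( 2·ln(2/δ) / max(N_τ − M, 1) ) } ) ≤ δ. -/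
open MeasureTheory

/-- Abstract martingale core of the paper's novel concentration inequality for
multi-task data aggregation at random stopping times (Lemma 5.6). -/
theorem stmt_0
    {Ω : Type*} {m0 : MeasurableSpace Ω} {P : Measure Ω}
    [IsProbabilityMeasure P]
    (F : Filtration ℕ m0)
    (T M k : ℕ) (hT : 1 ≤ T) (hM : 1 ≤ M) (hk : 1 ≤ k)
    (δ : ℝ) (hδ0 : 0 < δ) (hδ1 : δ ≤ 1)
    (Z : ℕ → Ω → ℝ) (hZadapt : Adapted F Z) (hZ0 : ∀ ω, Z 0 ω = 0)
    (N : ℕ → Ω → ℕ) (hNadapt : ∀ t, Measurable[F t] (N t))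
    (hNmono : ∀ ω, Monotone fun t => N t ω) (hN0 : ∀ ω, N 0 ω = 0)
    (hZN : ∀ t, ∀ᵐ ω ∂P, |Z t ω| ≤ (N t ω : ℝ))
    (hW : ∀ lam : ℝ, 0 < lam →
      Supermartingale
        (fun t ω => Real.exp (lam * Z t ω - (N t ω : ℝ) * lam ^ 2 / 8)) F P)
    (τ : Ω → ℕ) (hτ : IsStoppingTime F (fun ω => (τ ω : WithTop ℕ)))
    (hτle : ∀ᵐ ω ∂P, τ ω ≤ T + 1)
    (hNτ : ∀ᵐ ω ∂P, τ ω ≤ T → k ≤ N (τ ω) ω ∧ N (τ ω) ω ≤ k + M) :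
    P {ω | τ ω ≤ T ∧
        (N (τ ω) ω : ℝ) *
            Real.sqrt (2 * Real.log (2 / δ) / max ((N (τ ω) ω : ℝ) - (M : ℝ)) 1)
          ≤ Z (τ ω) ω} ≤ ENNReal.ofReal δ := by
  classical
  set L : ℝ := Real.log (2 / δ) with hLdef
  have hkR : (1 : ℝ) ≤ (k : ℝ) := by exact_mod_cast hk
  have hkpos : (0 : ℝ) < (k : ℝ) := by linarith
  have hL0 : 0 < L := Real.log_pos (by rw [lt_div_iff₀ hδ0]; linarith)
  set lam : ℝ := 4 * Real.sqrt (2 * L / (k : ℝ)) with hlamdef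
  have hlam0 : 0 < lam := by
    apply mul_pos (by norm_num)
    exact Real.sqrt_pos.2 (div_pos (by linarith) hkpos)
  have hWs := hW lam hlam0
  set f : ℕ → Ω → ℝ :=
    fun t ω => Real.exp (lam * Z t ω - (N t ω : ℝ) * lam ^ 2 / 8) with hfdef
  set τ' : Ω → ℕ := fun ω => min (τ ω) (T + 1) with hτ'def
  set σ : Ω → WithTop ℕ := fun ω => (τ' ω : WithTop ℕ) with hσdef
  have hτ's : IsStoppingTime F σ := by
    have e : σ = fun ω => min ((τ ω : WithTop ℕ)) (WithTop.some (T + 1)) := by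
      funext ω
      simp [hσdef, hτ'def, ← ENat.some_eq_natCast]
    rw [e]; exact hτ.min_const (T + 1)
  have hbdd : ∀ ω, σ ω ≤ ((T + 1 : ℕ) : WithTop ℕ) := fun ω =>
    WithTop.coe_le_coe.2 (min_le_right _ _)
  -- optional stopping : E[stoppedValue f σ] ≤ 1
  have hint : Integrable (stoppedValue f σ) P :=
    integrable_stoppedValue ℕ hτ's hWs.integrable hbdd
  have hOS : ∫ ω, stoppedValue f σ ω ∂P ≤ 1 := by
    have h := (hWs.neg).expected_stoppedValue_mono
      (isStoppingTime_const F 0) hτ's (fun ω => WithTop.coe_le_coe.2 (Nat.zero_le _)) hbdd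
    have e0 : (stoppedValue (-f) fun _ => WithTop.some (0 : ℕ)) = fun _ => (-1 : ℝ) := by
      funext ω
      simp [stoppedValue, hfdef, hZ0 ω, hN0 ω]
    have e1 : (stoppedValue (-f) σ) = fun ω => -(stoppedValue f σ ω) := rfl
    rw [e0, e1] at h
    simp only [integral_neg, integral_const, measure_univ, ENNReal.toReal_one,
      smul_eq_mul, one_mul, mul_one, probReal_univ] at h
    linarith
  -- pointwise: on the event, the stopped value is at least 1/δ
  have hsub : {ω | τ ω ≤ T ∧
        (N (τ ω) ω : ℝ) *
            Real.sqrt (2 * L / max ((N (τ ω) ω : ℝ) - (M : ℝ)) 1)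
          ≤ Z (τ ω) ω}
      ≤ᵐ[P] {ω | 1 / δ ≤ stoppedValue f σ ω} := by
    filter_upwards [hτle, hNτ] with ω h1 h2
    intro hE
    obtain ⟨hτT, hZge⟩ := hE
    obtain ⟨hkn, hnkM⟩ := h2 hτT
    have hττ' : τ' ω = τ ω := min_eq_left (by omega)
    set n : ℝ := ((N (τ ω) ω : ℕ) : ℝ) with hndef
    set m : ℝ := max (n - (M : ℝ)) 1 with hmdef
    have hknR : (k : ℝ) ≤ n := by rw [hndef]; exact_mod_cast hkn
    have hnkMR : n ≤ (k : ℝ) + (M : ℝ) := by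
      rw [hndef]; push_cast; exact_mod_cast hnkM
    have hn0 : 0 ≤ n := by positivity
    have hm1 : (1 : ℝ) ≤ m := le_max_right _ _
    have hm0 : (0 : ℝ) < m := by linarith
    have hmk : m ≤ (k : ℝ) := max_le (by linarith) hkR
    set s : ℝ := Real.sqrt (2 * L / m) with hsdef
    -- key sqrt facts
    have hss : Real.sqrt (2 * L / (k : ℝ)) * Real.sqrt (2 * L / (k : ℝ))
        = 2 * L / (k : ℝ) := Real.mul_self_sqrt (by positivity)
    have hdiv : 2 * L / (k : ℝ) ≤ 2 * L / m :=
      div_le_div_of_nonneg_left (by linarith) hm0 hmk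
    have hs_ge : Real.sqrt (2 * L / (k : ℝ)) ≤ s := Real.sqrt_le_sqrt hdiv
    have hsprod : Real.sqrt (2 * L / (k : ℝ)) * Real.sqrt (2 * L / (k : ℝ))
        ≤ Real.sqrt (2 * L / (k : ℝ)) * s :=
      mul_le_mul_of_nonneg_left hs_ge (Real.sqrt_nonneg _)
    have hA : 4 * (2 * L / (k : ℝ)) ≤ lam * s := by
      have : lam * s = 4 * (Real.sqrt (2 * L / (k : ℝ)) * s) := by
        rw [hlamdef]; ring
      rw [this]
      linarith [hsprod, hss.ge, hss.le]
    have hlamsq : lam ^ 2 = 16 * (2 * L / (k : ℝ)) := by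
      have h16 : lam ^ 2 = 16 * (Real.sqrt (2 * L / (k : ℝ))) ^ 2 := by
        rw [hlamdef]; ring
      rw [h16, Real.sq_sqrt (by positivity)]
    -- lower bound on the exponent
    have hZv : n * s ≤ Z (τ ω) ω := hZge
    have h1' : n * (lam * s) ≤ lam * Z (τ ω) ω := by
      have e : n * (lam * s) = lam * (n * s) := by ring
      rw [e]
      exact mul_le_mul_of_nonneg_left hZv hlam0.le
    have h2' : n * (4 * (2 * L / (k : ℝ))) ≤ n * (lam * s) :=
      mul_le_mul_of_nonneg_left hA hn0
    have h3 : 8 * (L * n / (k : ℝ)) ≤ lam * Z (τ ω) ω := by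
      have e : n * (4 * (2 * L / (k : ℝ))) = 8 * (L * n / (k : ℝ)) := by ring
      linarith [e ▸ h2']
    have h4 : n * lam ^ 2 / 8 = 4 * (L * n / (k : ℝ)) := by
      rw [hlamsq]; ring
    have h5 : 4 * L ≤ 4 * (L * n / (k : ℝ)) := by
      have hmul : L * (k : ℝ) ≤ L * n := mul_le_mul_of_nonneg_left hknR hL0.le
      have h2 : L ≤ L * n / (k : ℝ) := by rw [le_div_iff₀ hkpos]; linarith
      linarith
    have hlog : Real.log (1 / δ) ≤ L := by
      rw [hLdef]
      apply Real.log_le_log (by positivity)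
      have hpos : (0 : ℝ) < 1 / δ := by positivity
      have he : (2 : ℝ) / δ = 1 / δ + 1 / δ := by ring
      linarith
    -- conclude
    have hexp : Real.log (1 / δ) ≤ lam * Z (τ ω) ω - n * lam ^ 2 / 8 := by
      linarith
    show 1 / δ ≤ stoppedValue f σ ω
    have : stoppedValue f σ ω
        = Real.exp (lam * Z (τ ω) ω - n * lam ^ 2 / 8) := by
      simp [stoppedValue, hσdef, hττ', hfdef, hndef, ← ENat.some_eq_natCast]
    rw [this]
    calc 1 / δ = Real.exp (Real.log (1 / δ)) :=
          (Real.exp_log (by positivity)).symm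
      _ ≤ _ := Real.exp_le_exp.2 hexp
  -- Markov's inequality
  have hmono := measure_mono_ae hsub
  have hnn : 0 ≤ᵐ[P] stoppedValue f σ :=
    Filter.Eventually.of_forall fun ω => (Real.exp_pos _).le
  have hMarkov := mul_meas_ge_le_integral_of_nonneg hnn hint (1 / δ)
  have hfin : P {ω | 1 / δ ≤ stoppedValue f σ ω} ≠ ⊤ := measure_ne_top _ _
  have hfin2 : P {ω | τ ω ≤ T ∧
        (N (τ ω) ω : ℝ) *
            Real.sqrt (2 * L / max ((N (τ ω) ω : ℝ) - (M : ℝ)) 1)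
          ≤ Z (τ ω) ω} ≠ ⊤ := measure_ne_top _ _
  have htoReal : (P {ω | 1 / δ ≤ stoppedValue f σ ω}).toReal ≤ δ := by
    set x : ℝ := (P {ω | 1 / δ ≤ stoppedValue f σ ω}).toReal with hx
    have hx1 : 1 / δ * x ≤ 1 := le_trans hMarkov hOS
    have hx2 : δ * (1 / δ * x) ≤ δ * 1 := mul_le_mul_of_nonneg_left hx1 hδ0.le
    have hx3 : δ * (1 / δ * x) = x := by field_simp
    linarith
  calc P {ω | τ ω ≤ T ∧
        (N (τ ω) ω : ℝ) *
            Real.sqrt (2 * L / max ((N (τ ω) ω : ℝ) - (M : ℝ)) 1)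
          ≤ Z (τ ω) ω}
      ≤ P {ω | 1 / δ ≤ stoppedValue f σ ω} := hmono
    _ ≤ ENNReal.ofReal δ :=
        (ENNReal.le_ofReal_iff_toReal_le hfin hδ0.le).2 htoReal
end

section
/- Let T ≥ 1 and k ≥ 1 be integers and let δ ∈ (0,1]. Let (F_t)_{t∈ℕ} be a filtration on a probability space, let (Z_t)_{t∈ℕ} be an adapted real-valued process with Z_0 = 0, and let (N_t)_{t∈ℕ} be an adapted ℕ-valued nondecreasing process with N_0 = 0. Suppose that for every λ > 0 the process W_t(λ) = exp(λ·Z_t − N_t·λ²/8) is a supermartingale with respect to (F_t). Let τ be a stopping time with τ ≤ T + 1 almost surely, and suppose that almost surely on the event {τ ≤ T} one has N_τ ≥ k. Then P( {τ ≤ T} ∩ { Z_τ ≥ N_τ · √( 2·ln(1/δ) / k ) } ) ≤ δ. -/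
open MeasureTheory

/-- Optional-stopping tail bound underlying the paper's concentration lemmas at
random stopping times (Lemmas B.3 and B.5). -/
theorem stmt_1
    {Ω : Type*} {m0 : MeasurableSpace Ω} {P : Measure Ω}
    [IsProbabilityMeasure P]
    (F : Filtration ℕ m0)
    (T k : ℕ) (hT : 1 ≤ T) (hk : 1 ≤ k)
    (δ : ℝ) (hδ0 : 0 < δ) (hδ1 : δ ≤ 1)
    (Z : ℕ → Ω → ℝ) (hZadapt : Adapted F Z) (hZ0 : ∀ ω, Z 0 ω = 0)
    (N : ℕ → Ω → ℕ) (hNadapt : ∀ t, Measurable[F t] (N t))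
    (hNmono : ∀ ω, Monotone fun t => N t ω) (hN0 : ∀ ω, N 0 ω = 0)
    (hW : ∀ lam : ℝ, 0 < lam →
      Supermartingale
        (fun t ω => Real.exp (lam * Z t ω - (N t ω : ℝ) * lam ^ 2 / 8)) F P)
    (τ : Ω → ℕ) (hτ : IsStoppingTime F (fun ω => (τ ω : WithTop ℕ)))
    (hτle : ∀ᵐ ω ∂P, τ ω ≤ T + 1)
    (hNτ : ∀ᵐ ω ∂P, τ ω ≤ T → k ≤ N (τ ω) ω) :
    P {ω | τ ω ≤ T ∧
        (N (τ ω) ω : ℝ) * Real.sqrt (2 * Real.log (1 / δ) / (k : ℝ))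
          ≤ Z (τ ω) ω} ≤ ENNReal.ofReal δ := by
  rcases eq_or_lt_of_le hδ1 with hδeq | hδlt
  · subst hδeq
    simpa using prob_le_one
  -- δ < 1
  set L : ℝ := Real.log (1 / δ) with hLdef
  have hL : 0 < L := Real.log_pos (by rw [lt_div_iff₀ hδ0]; linarith)
  have hk0 : (0:ℝ) < (k:ℝ) := by exact_mod_cast hk
  set c : ℝ := Real.sqrt (2 * L / (k:ℝ)) with hcdef
  have hc2 : c ^ 2 = 2 * L / (k:ℝ) := by
    rw [hcdef, Real.sq_sqrt]; positivity
  have hc : 0 < c := Real.sqrt_pos.2 (by positivity)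
  -- the exponential supermartingale at lam = c
  set W : ℕ → Ω → ℝ :=
    fun t ω => Real.exp (c * Z t ω - (N t ω : ℝ) * c ^ 2 / 8) with hWdef
  have hWsup : Supermartingale W F P := hW c hc
  -- stopped at τ' := min τ (T+1)
  set τ' : Ω → ℕ := fun ω => min (τ ω) (T + 1) with hτ'def
  have hτ' : IsStoppingTime F (fun ω => (τ' ω : WithTop ℕ)) := by
    have hfun : (fun ω => (τ' ω : WithTop ℕ))
        = fun ω => min (τ ω : WithTop ℕ) ((T + 1 : ℕ) : WithTop ℕ) := by
      funext ω; exact WithTop.coe_min _ _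
    rw [hfun]; exact hτ.min_const (T + 1)
  have hbdd : ∀ ω, τ' ω ≤ T + 1 := fun ω => min_le_right _ _
  have hint : Integrable (stoppedValue W (fun ω => (τ' ω : WithTop ℕ))) P :=
    integrable_stoppedValue ℕ hτ' hWsup.integrable (fun ω => WithTop.coe_le_coe.2 (hbdd ω))
  -- optional sampling: E[W_{τ'}] ≤ E[W_0] = 1
  have hsub : Submartingale (-W) F P := hWsup.neg
  have hOS := hsub.expected_stoppedValue_mono (isStoppingTime_const F 0) hτ'
      (fun ω => WithTop.coe_le_coe.2 (Nat.zero_le _)) (fun ω => WithTop.coe_le_coe.2 (hbdd ω))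
  have hEW : ∫ ω, stoppedValue W (fun ω => (τ' ω : WithTop ℕ)) ω ∂P ≤ 1 := by
    have h0 : stoppedValue (-W) (fun _ => ((0:ℕ) : WithTop ℕ)) = fun ω => -(W 0 ω) := rfl
    have h1 : stoppedValue (-W) (fun ω => (τ' ω : WithTop ℕ)) = fun ω => -(stoppedValue W (fun ω => (τ' ω : WithTop ℕ)) ω) := rfl
    rw [stoppedValue_const, h1] at hOS; simp only [Pi.neg_apply] at hOS
    rw [integral_neg, integral_neg, neg_le_neg_iff] at hOS
    refine hOS.trans_eq ?_
    have : (fun ω => W 0 ω) = fun _ : Ω => (1:ℝ) := by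
      funext ω; simp [hWdef, hZ0 ω, hN0 ω]
    rw [this, integral_const]; simp
  -- Markov's inequality
  have hnn : 0 ≤ᵐ[P] stoppedValue W (fun ω => (τ' ω : WithTop ℕ)) :=
    Filter.Eventually.of_forall fun ω => (Real.exp_pos _).le
  have hMarkov := mul_meas_ge_le_integral_of_nonneg hnn hint (1 / δ)
  -- a.e. inclusion of the event
  have hincl : {ω | τ ω ≤ T ∧
        (N (τ ω) ω : ℝ) * c ≤ Z (τ ω) ω}
      ≤ᵐ[P] {ω | 1 / δ ≤ stoppedValue W (fun ω => (τ' ω : WithTop ℕ)) ω} := by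
    filter_upwards [hNτ] with ω hNω hmem
    obtain ⟨hτT, hZc⟩ := hmem
    have hτ'eq : τ' ω = τ ω := min_eq_left (by omega)
    have hkN : (k:ℝ) ≤ (N (τ ω) ω : ℝ) := by exact_mod_cast hNω hτT
    have hNnn : (0:ℝ) ≤ (N (τ ω) ω : ℝ) := Nat.cast_nonneg _
    show 1 / δ ≤ stoppedValue W (fun ω => (τ' ω : WithTop ℕ)) ω
    have : stoppedValue W (fun ω => (τ' ω : WithTop ℕ)) ω
        = Real.exp (c * Z (τ ω) ω - (N (τ ω) ω : ℝ) * c ^ 2 / 8) := by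
      simp [stoppedValue, hτ'eq, hWdef]; rfl
    rw [this, ← Real.exp_log (show (0:ℝ) < 1 / δ by positivity)]
    apply Real.exp_le_exp.2
    have h1 : L ≤ (N (τ ω) ω : ℝ) * c ^ 2 * (7 / 8) := by
      have : (k:ℝ) * c ^ 2 * (7 / 8) = 7 / 4 * L := by
        rw [hc2]; field_simp; ring
      nlinarith [sq_nonneg c]
    have h2 : c * ((N (τ ω) ω : ℝ) * c) ≤ c * Z (τ ω) ω :=
      mul_le_mul_of_nonneg_left hZc hc.le
    nlinarith
  have hPS : (P {ω | τ ω ≤ T ∧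
      (N (τ ω) ω : ℝ) * c ≤ Z (τ ω) ω}).toReal ≤ δ := by
    have hle := measure_mono_ae hincl
    have hfin : P {ω | 1 / δ ≤ stoppedValue W (fun ω => (τ' ω : WithTop ℕ)) ω} ≠ ⊤ := measure_ne_top _ _
    have h1 : (P {ω | τ ω ≤ T ∧ (N (τ ω) ω : ℝ) * c ≤ Z (τ ω) ω}).toReal
        ≤ (P {ω | 1 / δ ≤ stoppedValue W (fun ω => (τ' ω : WithTop ℕ)) ω}).toReal :=
      ENNReal.toReal_mono hfin hle
    have h2 : (P {ω | 1 / δ ≤ stoppedValue W (fun ω => (τ' ω : WithTop ℕ)) ω}).toReal ≤ δ := by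
      have := hMarkov.trans hEW
      rw [div_mul_eq_mul_div, div_le_one hδ0, one_mul] at this
      exact this
    linarith
  rw [ENNReal.le_ofReal_iff_toReal_le (measure_ne_top _ _) hδ0.le]
  exact hPS
end

section
/- Let (Ω, F, P) be a probability space, X : Ω → ℝ a random variable, E ∈ F an event, and C₁ > 0 a real number. Suppose that P({X ≤ −z} ∩ E) ≤ C₁·exp(−2z²) for every real z ≥ 1. Then ∫_E (Φ̄(−X))⁻¹ dP ≤ (8√(2π)/e)·C₁ + 8√(2π)·e + 1/Φ̄(1). -/
open MeasureTheory

/-- The complementary CDF of the standard Gaussian distribution. -/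
noncomputable def gaussCCDF (z : ℝ) : ℝ :=
  ∫ x in Set.Ioi z, (Real.sqrt (2 * Real.pi))⁻¹ * Real.exp (-x ^ 2 / 2)

open Set Real
open scoped ENNReal

lemma gauss_integrable :
    Integrable (fun x : ℝ => (Real.sqrt (2 * Real.pi))⁻¹ * Real.exp (-x ^ 2 / 2)) := by
  have := (integrable_exp_neg_mul_sq (by norm_num : (0:ℝ) < 1/2)).const_mul
      (Real.sqrt (2 * Real.pi))⁻¹
  exact this.congr (Filter.Eventually.of_forall fun x => by ring_nf)

lemma gauss_nonneg (x : ℝ) : 0 ≤ (Real.sqrt (2 * Real.pi))⁻¹ * Real.exp (-x ^ 2 / 2) := by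
  positivity

lemma gaussCCDF_nonneg (z : ℝ) : 0 ≤ gaussCCDF z :=
  setIntegral_nonneg measurableSet_Ioi fun x _ => gauss_nonneg x

lemma gaussCCDF_antitone : Antitone gaussCCDF := fun a b hab => by
  apply setIntegral_mono_set gauss_integrable.integrableOn
    (Filter.Eventually.of_forall fun x => gauss_nonneg x)
  exact (Ioi_subset_Ioi hab).eventuallyLE

lemma gaussCCDF_lb {z : ℝ} (hz : 0 ≤ z) :
    (Real.sqrt (2 * Real.pi))⁻¹ * Real.exp (-(z+1) ^ 2 / 2) ≤ gaussCCDF z := by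
  have h1 : (Real.sqrt (2 * Real.pi))⁻¹ * Real.exp (-(z+1) ^ 2 / 2)
      = ∫ x in Set.Ioc z (z+1), (Real.sqrt (2 * Real.pi))⁻¹ * Real.exp (-(z+1) ^ 2 / 2) := by
    rw [setIntegral_const]
    simp [Real.volume_Ioc]
  rw [h1]
  have h2 : ∫ x in Set.Ioc z (z+1), (Real.sqrt (2 * Real.pi))⁻¹ * Real.exp (-(z+1) ^ 2 / 2)
      ≤ ∫ x in Set.Ioc z (z+1), (Real.sqrt (2 * Real.pi))⁻¹ * Real.exp (-x ^ 2 / 2) := by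
    apply setIntegral_mono_on (integrableOn_const (by simp) enorm_ne_top)
      gauss_integrable.integrableOn measurableSet_Ioc
    intro x hx
    have hx0 : 0 ≤ x := le_trans hz hx.1.le
    have hxz : x ^ 2 ≤ (z+1) ^ 2 := pow_le_pow_left₀ hx0 hx.2 2
    gcongr
  refine h2.trans ?_
  apply setIntegral_mono_set gauss_integrable.integrableOn
    (Filter.Eventually.of_forall fun x => gauss_nonneg x)
  exact (Set.Ioc_subset_Ioi_self).eventuallyLE

lemma gaussCCDF_pos1 : 0 < gaussCCDF 1 :=
  lt_of_lt_of_le (by positivity) (gaussCCDF_lb zero_le_one)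

/-- upper envelope for `(gaussCCDF z)⁻¹` for `z ≥ 1`. -/
noncomputable def gEnv (z : ℝ) : ℝ := Real.sqrt (2 * Real.pi) * Real.exp ((z+1) ^ 2 / 2)

noncomputable def gEnv' (z : ℝ) : ℝ :=
  Real.sqrt (2 * Real.pi) * ((z+1) * Real.exp ((z+1) ^ 2 / 2))

lemma gEnv'_nonneg {z : ℝ} (hz : 0 ≤ z) : 0 ≤ gEnv' z := by
  unfold gEnv'; positivity

lemma hasDerivAt_gEnv (z : ℝ) : HasDerivAt gEnv (gEnv' z) z := by
  have h1 : HasDerivAt (fun z : ℝ => (z+1) ^ 2 / 2) (z+1) z := by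
    have h0 : HasDerivAt (fun z : ℝ => z + 1) 1 z := (hasDerivAt_id z).add_const 1
    have := (h0.pow 2).div_const 2
    exact this.congr_deriv (by push_cast; ring)
  have h2 := (h1.exp).const_mul (Real.sqrt (2 * Real.pi))
  exact h2.congr_deriv (by unfold gEnv'; ring)

lemma gEnv'_continuous : Continuous gEnv' := by
  unfold gEnv'
  fun_prop

lemma inv_gaussCCDF_le {z : ℝ} (hz : (0:ℝ) ≤ z) : (gaussCCDF z)⁻¹ ≤ gEnv z := by
  have hlb := gaussCCDF_lb hz
  have hpos : (0:ℝ) < (Real.sqrt (2 * Real.pi))⁻¹ * Real.exp (-(z+1) ^ 2 / 2) := by positivity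
  have := inv_anti₀ hpos hlb
  refine this.trans_eq ?_
  rw [mul_inv, inv_inv, ← Real.exp_neg]
  unfold gEnv
  ring_nf

lemma gEnv_eq_add_integral {z : ℝ} (hz : 1 ≤ z) :
    gEnv z = gEnv 1 + ∫ s in (1:ℝ)..z, gEnv' s := by
  rw [intervalIntegral.integral_eq_sub_of_hasDerivAt
    (fun x _ => hasDerivAt_gEnv x) (gEnv'_continuous.intervalIntegrable 1 z)]
  ring

lemma integrableOn_x_exp :
    IntegrableOn (fun s : ℝ => s * Real.exp (-s ^ 2 / 2)) (Set.Ioi 1) := by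
  have := (integrable_mul_exp_neg_mul_sq (by norm_num : (0:ℝ) < 1/2))
  exact (this.congr (Filter.Eventually.of_forall fun x => by ring_nf)).integrableOn

lemma integral_x_exp : ∫ s in Set.Ioi (1:ℝ), s * Real.exp (-s ^ 2 / 2) = Real.exp (-(1:ℝ)/2) := by
  have hderiv : ∀ x ∈ Set.Ici (1:ℝ),
      HasDerivAt (fun s : ℝ => -Real.exp (-s ^ 2 / 2)) (x * Real.exp (-x ^ 2 / 2)) x := by
    intro x _
    have h1 : HasDerivAt (fun s : ℝ => -s ^ 2 / 2) (-x) x := by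
      have := ((hasDerivAt_pow 2 x).neg).div_const 2
      simpa using this.congr_deriv (by ring)
    exact (h1.exp).neg.congr_deriv (by ring)
  have hint := integrableOn_x_exp
  have htend : Filter.Tendsto (fun s : ℝ => -Real.exp (-s ^ 2 / 2)) Filter.atTop (nhds 0) := by
    rw [show (0:ℝ) = -0 by ring]
    apply Filter.Tendsto.neg
    apply Real.tendsto_exp_atBot.comp
    have h1 : Filter.Tendsto (fun s : ℝ => s ^ 2 / 2) Filter.atTop Filter.atTop :=
      (Filter.tendsto_pow_atTop (two_ne_zero)).atTop_div_const (by norm_num)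
    exact (Filter.tendsto_neg_atTop_atBot.comp h1).congr (fun s => by simp [Function.comp]; ring)
  have := MeasureTheory.integral_Ioi_of_hasDerivAt_of_tendsto' hderiv hint htend
  simpa using this

lemma aux_indicator (z : ℝ) (F : ℝ → ℝ≥0∞) :
    ∫⁻ s in Set.Ioi (1:ℝ), (Set.Iic z).indicator F s = ∫⁻ s in Set.Ioc (1:ℝ) z, F s := by
  rw [lintegral_indicator measurableSet_Iic, Measure.restrict_restrict measurableSet_Iic,
    Set.inter_comm, Set.Ioi_inter_Iic]

lemma key_bound {s : ℝ} (hs : 1 ≤ s) {C₁ : ℝ} (hC : 0 ≤ C₁) :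
    gEnv' s * (C₁ * Real.exp (-2 * s ^ 2)) ≤
      2 * Real.sqrt (2 * Real.pi) * C₁ * Real.exp (1/2) * (s * Real.exp (-s ^ 2 / 2)) := by
  have h1 : Real.exp ((s+1) ^ 2 / 2) * Real.exp (-2 * s ^ 2)
      ≤ Real.exp (1/2) * Real.exp (-s ^ 2 / 2) := by
    rw [← Real.exp_add, ← Real.exp_add]
    apply Real.exp_le_exp.2
    nlinarith
  have h2 : s + 1 ≤ 2 * s := by linarith
  have hsq : (0:ℝ) ≤ Real.sqrt (2 * Real.pi) := Real.sqrt_nonneg _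
  calc gEnv' s * (C₁ * Real.exp (-2 * s ^ 2))
      = Real.sqrt (2 * Real.pi) * C₁ * ((s+1) * (Real.exp ((s+1) ^ 2 / 2) * Real.exp (-2 * s ^ 2))) := by
        unfold gEnv'; ring
    _ ≤ Real.sqrt (2 * Real.pi) * C₁ * ((2*s) * (Real.exp (1/2) * Real.exp (-s ^ 2 / 2))) := by
        apply mul_le_mul_of_nonneg_left ?_ (by positivity)
        apply mul_le_mul h2 h1 (by positivity) (by linarith)
    _ = 2 * Real.sqrt (2 * Real.pi) * C₁ * Real.exp (1/2) * (s * Real.exp (-s ^ 2 / 2)) := by ring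

/-- Paper's Lemma C.2 (lem:sg-anticonc): a random variable with a light lower
probability tail has a small value of `E[1/Φ̄(−X)]` on the event `E`. -/
theorem stmt_2 {Ω : Type*} [MeasurableSpace Ω] (P : Measure Ω) [IsProbabilityMeasure P]
    (X : Ω → ℝ) (hX : Measurable X) (E : Set Ω) (hE : MeasurableSet E)
    (C₁ : ℝ) (hC₁ : 0 < C₁)
    (h : ∀ z : ℝ, 1 ≤ z →
      P ({ω | X ω ≤ -z} ∩ E) ≤ ENNReal.ofReal (C₁ * Real.exp (-2 * z ^ 2))) :
    ∫ ω in E, (gaussCCDF (-X ω))⁻¹ ∂P ≤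
      8 * Real.sqrt (2 * Real.pi) / Real.exp 1 * C₁
        + 8 * Real.sqrt (2 * Real.pi) * Real.exp 1 + 1 / gaussCCDF 1 := by
  have hsq : (0:ℝ) ≤ Real.sqrt (2 * Real.pi) := Real.sqrt_nonneg _
  have he0 : (0:ℝ) < Real.exp 1 := Real.exp_pos 1
  have hRHS : (0:ℝ) ≤ 8 * Real.sqrt (2 * Real.pi) / Real.exp 1 * C₁
      + 8 * Real.sqrt (2 * Real.pi) * Real.exp 1 + 1 / gaussCCDF 1 := by
    have := gaussCCDF_pos1
    positivity
  -- measurability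
  have hgm : Measurable gaussCCDF := gaussCCDF_antitone.measurable
  have hZ : Measurable fun ω => -X ω := hX.neg
  have hfm : Measurable fun ω => (gaussCCDF (-X ω))⁻¹ := (hgm.comp hZ).inv
  -- pass to lintegral
  rw [MeasureTheory.integral_eq_lintegral_of_nonneg_ae
    (Filter.Eventually.of_forall fun ω => inv_nonneg.2 (gaussCCDF_nonneg _))
    hfm.aestronglyMeasurable]
  apply ENNReal.toReal_le_of_le_ofReal hRHS
  -- split the event
  set S : Set Ω := {ω | 1 < -X ω} with hSdef
  have hS : MeasurableSet S := measurableSet_lt measurable_const hZ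
  have hsplit : ∫⁻ ω in E, ENNReal.ofReal ((gaussCCDF (-X ω))⁻¹) ∂P
      = (∫⁻ ω in S ∩ E, ENNReal.ofReal ((gaussCCDF (-X ω))⁻¹) ∂P)
        + ∫⁻ ω in Sᶜ ∩ E, ENNReal.ofReal ((gaussCCDF (-X ω))⁻¹) ∂P := by
    rw [← Measure.restrict_restrict hS, ← Measure.restrict_restrict hS.compl]
    exact (lintegral_add_compl _ hS).symm
  rw [hsplit]
  -- Part B : on Sᶜ ∩ E
  have hB : ∫⁻ ω in Sᶜ ∩ E, ENNReal.ofReal ((gaussCCDF (-X ω))⁻¹) ∂P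
      ≤ ENNReal.ofReal (1 / gaussCCDF 1) := by
    calc ∫⁻ ω in Sᶜ ∩ E, ENNReal.ofReal ((gaussCCDF (-X ω))⁻¹) ∂P
        ≤ ∫⁻ _ω in Sᶜ ∩ E, ENNReal.ofReal (1 / gaussCCDF 1) ∂P := by
          apply setLIntegral_mono' (hS.compl.inter hE)
          intro ω hω
          apply ENNReal.ofReal_le_ofReal
          rw [one_div]
          have h1 : -X ω ≤ 1 := not_lt.1 hω.1
          exact inv_anti₀ gaussCCDF_pos1 (gaussCCDF_antitone h1)
      _ = ENNReal.ofReal (1 / gaussCCDF 1) * P (Sᶜ ∩ E) := setLIntegral_const _ _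
      _ ≤ ENNReal.ofReal (1 / gaussCCDF 1) * 1 := by gcongr; exact prob_le_one
      _ = ENNReal.ofReal (1 / gaussCCDF 1) := mul_one _
  -- Part A : on S ∩ E
  have hA : ∫⁻ ω in S ∩ E, ENNReal.ofReal ((gaussCCDF (-X ω))⁻¹) ∂P
      ≤ ENNReal.ofReal (gEnv 1) + ENNReal.ofReal (2 * Real.sqrt (2 * Real.pi) * C₁) := by
    have hAset : MeasurableSet (S ∩ E) := hS.inter hE
    set G : Ω → ℝ≥0∞ := fun ω =>
      ∫⁻ s in Set.Ioi (1:ℝ), (Set.Iic (-X ω)).indicator (fun s' => ENNReal.ofReal (gEnv' s')) s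
      with hGdef
    have hpt : ∀ ω ∈ S ∩ E, ENNReal.ofReal ((gaussCCDF (-X ω))⁻¹)
        ≤ ENNReal.ofReal (gEnv 1) + G ω := by
      intro ω hω
      have hz : (1:ℝ) ≤ -X ω := le_of_lt hω.1
      have h1 : (gaussCCDF (-X ω))⁻¹ ≤ gEnv (-X ω) := inv_gaussCCDF_le (by linarith)
      have h2 := gEnv_eq_add_integral hz
      have hIeq : ENNReal.ofReal (∫ s in (1:ℝ)..(-X ω), gEnv' s) = G ω := by
        simp only [hGdef]
        rw [aux_indicator, intervalIntegral.integral_of_le hz,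
          ofReal_integral_eq_lintegral_ofReal (gEnv'_continuous.integrableOn_Ioc)
            ((ae_restrict_iff' measurableSet_Ioc).2 (Filter.Eventually.of_forall
              fun s hs => gEnv'_nonneg (by linarith [hs.1])))]
      calc ENNReal.ofReal ((gaussCCDF (-X ω))⁻¹)
          ≤ ENNReal.ofReal (gEnv (-X ω)) := ENNReal.ofReal_le_ofReal h1
        _ = ENNReal.ofReal (gEnv 1 + ∫ s in (1:ℝ)..(-X ω), gEnv' s) := by rw [h2]
        _ = ENNReal.ofReal (gEnv 1) + ENNReal.ofReal (∫ s in (1:ℝ)..(-X ω), gEnv' s) :=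
            ENNReal.ofReal_add (by unfold gEnv; positivity)
              (intervalIntegral.integral_nonneg hz fun s hs => gEnv'_nonneg (by linarith [hs.1]))
        _ = ENNReal.ofReal (gEnv 1) + G ω := by rw [hIeq]
    have hG : ∫⁻ ω in S ∩ E, G ω ∂P ≤ ENNReal.ofReal (2 * Real.sqrt (2 * Real.pi) * C₁) := by
      have hswap : ∫⁻ ω in S ∩ E, G ω ∂P
          = ∫⁻ s in Set.Ioi (1:ℝ), ∫⁻ ω in S ∩ E,
              (Set.Iic (-X ω)).indicator (fun s' => ENNReal.ofReal (gEnv' s')) s ∂P := by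
        apply lintegral_lintegral_swap
        have hT : MeasurableSet {p : Ω × ℝ | p.2 ≤ -X p.1} :=
          measurableSet_le measurable_snd (hZ.comp measurable_fst)
        have huncurry : Function.uncurry (fun ω s =>
              (Set.Iic (-X ω)).indicator (fun s' => ENNReal.ofReal (gEnv' s')) s)
            = ({p : Ω × ℝ | p.2 ≤ -X p.1}).indicator (fun p => ENNReal.ofReal (gEnv' p.2)) := by
          ext p
          by_cases hp : p.2 ≤ -X p.1 <;> simp [Function.uncurry, Set.indicator, hp]
        rw [huncurry]
        exact ((ENNReal.measurable_ofReal.comp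
          (gEnv'_continuous.measurable.comp measurable_snd)).indicator hT).aemeasurable
      have hinner : ∀ s ∈ Set.Ioi (1:ℝ),
          (∫⁻ ω in S ∩ E,
            (Set.Iic (-X ω)).indicator (fun s' => ENNReal.ofReal (gEnv' s')) s ∂P)
          ≤ ENNReal.ofReal (gEnv' s * (C₁ * Real.exp (-2 * s ^ 2))) := by
        intro s hs
        have hs1 : (1:ℝ) ≤ s := le_of_lt hs
        have hms : MeasurableSet {ω' : Ω | s ≤ -X ω'} := measurableSet_le measurable_const hZ
        calc ∫⁻ ω in S ∩ E,
              (Set.Iic (-X ω)).indicator (fun s' => ENNReal.ofReal (gEnv' s')) s ∂P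
            = ∫⁻ ω in S ∩ E,
              ({ω' : Ω | s ≤ -X ω'}).indicator (fun _ => ENNReal.ofReal (gEnv' s)) ω ∂P := by
              apply lintegral_congr
              intro ω
              by_cases hp : s ≤ -X ω <;> simp [Set.indicator, hp]
          _ = ENNReal.ofReal (gEnv' s) * (P.restrict (S ∩ E)) {ω' : Ω | s ≤ -X ω'} := by
              rw [lintegral_indicator hms, setLIntegral_const]
          _ = ENNReal.ofReal (gEnv' s) * P ({ω' : Ω | s ≤ -X ω'} ∩ (S ∩ E)) := by
              rw [Measure.restrict_apply hms]
          _ ≤ ENNReal.ofReal (gEnv' s) * ENNReal.ofReal (C₁ * Real.exp (-2 * s ^ 2)) := by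
              gcongr
              refine le_trans (measure_mono ?_) (h s hs1)
              intro ω hω
              exact ⟨show X ω ≤ -s by have := hω.1; simp only [Set.mem_setOf_eq] at this; linarith,
                hω.2.2⟩
          _ = ENNReal.ofReal (gEnv' s * (C₁ * Real.exp (-2 * s ^ 2))) :=
              (ENNReal.ofReal_mul (gEnv'_nonneg (by linarith))).symm
      rw [hswap]
      calc ∫⁻ s in Set.Ioi (1:ℝ), ∫⁻ ω in S ∩ E,
              (Set.Iic (-X ω)).indicator (fun s' => ENNReal.ofReal (gEnv' s')) s ∂P
          ≤ ∫⁻ s in Set.Ioi (1:ℝ), ENNReal.ofReal (gEnv' s * (C₁ * Real.exp (-2 * s ^ 2))) :=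
            setLIntegral_mono' measurableSet_Ioi hinner
        _ ≤ ∫⁻ s in Set.Ioi (1:ℝ), ENNReal.ofReal
              (2 * Real.sqrt (2 * Real.pi) * C₁ * Real.exp (1/2) * (s * Real.exp (-s ^ 2 / 2))) :=
            setLIntegral_mono' measurableSet_Ioi fun s hs =>
              ENNReal.ofReal_le_ofReal (key_bound (le_of_lt hs) hC₁.le)
        _ = ENNReal.ofReal (∫ s in Set.Ioi (1:ℝ),
              2 * Real.sqrt (2 * Real.pi) * C₁ * Real.exp (1/2) * (s * Real.exp (-s ^ 2 / 2))) :=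
            (ofReal_integral_eq_lintegral_ofReal (integrableOn_x_exp.const_mul _)
              ((ae_restrict_iff' measurableSet_Ioi).2 (Filter.Eventually.of_forall fun s hs => by
                have h1s : (0:ℝ) ≤ s := by have := hs.out; linarith
                positivity))).symm
        _ = ENNReal.ofReal (2 * Real.sqrt (2 * Real.pi) * C₁) := by
            rw [MeasureTheory.integral_const_mul, integral_x_exp, mul_assoc, ← Real.exp_add]
            norm_num
    calc ∫⁻ ω in S ∩ E, ENNReal.ofReal ((gaussCCDF (-X ω))⁻¹) ∂P
        ≤ ∫⁻ ω in S ∩ E, (ENNReal.ofReal (gEnv 1) + G ω) ∂P :=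
          setLIntegral_mono' hAset hpt
      _ = ENNReal.ofReal (gEnv 1) * P (S ∩ E) + ∫⁻ ω in S ∩ E, G ω ∂P := by
          rw [lintegral_add_left measurable_const, setLIntegral_const]
      _ ≤ ENNReal.ofReal (gEnv 1) * 1 + ENNReal.ofReal (2 * Real.sqrt (2 * Real.pi) * C₁) := by
          gcongr
          exact prob_le_one
      _ = ENNReal.ofReal (gEnv 1) + ENNReal.ofReal (2 * Real.sqrt (2 * Real.pi) * C₁) := by
          rw [mul_one]
  calc (∫⁻ ω in S ∩ E, ENNReal.ofReal ((gaussCCDF (-X ω))⁻¹) ∂P)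
        + ∫⁻ ω in Sᶜ ∩ E, ENNReal.ofReal ((gaussCCDF (-X ω))⁻¹) ∂P
      ≤ (ENNReal.ofReal (gEnv 1) + ENNReal.ofReal (2 * Real.sqrt (2 * Real.pi) * C₁))
        + ENNReal.ofReal (1 / gaussCCDF 1) := add_le_add hA hB
    _ ≤ ENNReal.ofReal (8 * Real.sqrt (2 * Real.pi) / Real.exp 1 * C₁
        + 8 * Real.sqrt (2 * Real.pi) * Real.exp 1 + 1 / gaussCCDF 1) := by
        rw [← ENNReal.ofReal_add (by unfold gEnv; positivity) (by positivity),
          ← ENNReal.ofReal_add (by unfold gEnv; positivity)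
            (by have := gaussCCDF_pos1; positivity)]
        apply ENNReal.ofReal_le_ofReal
        have hg1 : gEnv 1 = Real.sqrt (2 * Real.pi) * Real.exp 2 := by
          unfold gEnv; norm_num
        have h2 : Real.exp 2 ≤ 8 * Real.exp 1 := by
          rw [show (2:ℝ) = 1 + 1 by norm_num, Real.exp_add]
          nlinarith [Real.exp_one_lt_d9]
        have h3 : 2 * Real.sqrt (2 * Real.pi) * C₁
            ≤ 8 * Real.sqrt (2 * Real.pi) / Real.exp 1 * C₁ := by
          apply mul_le_mul_of_nonneg_right ?_ hC₁.le
          rw [le_div_iff₀ he0]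
          nlinarith [Real.exp_one_lt_d9]
        have h4 : gEnv 1 ≤ 8 * Real.sqrt (2 * Real.pi) * Real.exp 1 := by
          rw [hg1]; nlinarith
        linarith
end

section
/- Let K ≥ 1 be an integer, let θ_1, …, θ_K be mutually independent real-valued random variables on a probability space, and let I be a random variable taking values in {1,…,K} such that almost surely θ_I ≥ θ_j for every j ∈ {1,…,K} (i.e., I selects an index achieving the maximum of the θ's). Then for all indices i, l ∈ {1,…,K} and every z ∈ ℝ with P(θ_l > z) > 0, one has P({I = i} ∩ {θ_i ≤ z}) ≤ ( P(θ_l ≤ z) / P(θ_l > z) ) · P(I = l). -/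
open MeasureTheory ProbabilityTheory

/-- Abstract core of the paper's Lemma C.7 (lem:change-arm). -/
theorem stmt_3 {Ω : Type*} [MeasurableSpace Ω] (P : Measure Ω) [IsProbabilityMeasure P]
    (K : ℕ) (hK : 1 ≤ K) (θ : Fin K → Ω → ℝ) (hθ : ∀ j, Measurable (θ j))
    (hindep : iIndepFun θ P)
    (I : Ω → Fin K) (hI : Measurable I)
    (hmax : ∀ᵐ ω ∂P, ∀ j, θ j ω ≤ θ (I ω) ω)
    (i l : Fin K) (z : ℝ) (hl : 0 < P {ω | z < θ l ω}) :
    P ({ω | I ω = i} ∩ {ω | θ i ω ≤ z}) ≤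
      (P {ω | θ l ω ≤ z} / P {ω | z < θ l ω}) * P {ω | I ω = l} := by
  set A : Fin K → Set Ω := fun j => θ j ⁻¹' Set.Iic z with hA
  set S : Fin K → Set Ω := fun j => if j = l then θ l ⁻¹' Set.Ioi z else A j with hS
  have hAm : ∀ j, MeasurableSet[(inferInstance : MeasurableSpace ℝ).comap (θ j)] (A j) :=
    fun j => ⟨Set.Iic z, measurableSet_Iic, rfl⟩
  have hSm : ∀ j, MeasurableSet[(inferInstance : MeasurableSpace ℝ).comap (θ j)] (S j) := by
    intro j
    by_cases h : j = l
    · subst h; simp only [hS, if_pos rfl]; exact ⟨Set.Ioi z, measurableSet_Ioi, rfl⟩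
    · simp only [hS, if_neg h]; exact hAm j
  have step1 : P ({ω | I ω = i} ∩ {ω | θ i ω ≤ z}) ≤ P (⋂ j, A j) := by
    refine measure_mono_ae ?_
    filter_upwards [hmax] with ω hω
    rintro ⟨hIi, hiz⟩
    refine Set.mem_iInter.2 fun j => ?_
    have := hω j
    rw [hIi] at this
    exact le_trans this hiz
  have step2 : P (⋂ j, A j) = ∏ j, P (A j) := hindep.meas_iInter hAm
  have step3 : P (⋂ j, S j) = ∏ j, P (S j) := hindep.meas_iInter hSm
  have step4 : P (⋂ j, S j) ≤ P {ω | I ω = l} := by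
    refine measure_mono_ae ?_
    filter_upwards [hmax] with ω hω hmem
    have hlω : z < θ l ω := by
      have := Set.mem_iInter.1 hmem l
      simpa [hS] using this
    by_contra hne
    have hIω : θ (I ω) ω ≤ z := by
      have := Set.mem_iInter.1 hmem (I ω)
      simp only [hS] at this
      rw [if_neg (show I ω ≠ l from hne)] at this
      simpa [hA] using this
    exact absurd (lt_of_lt_of_le hlω (hω l)) (not_lt.2 hIω)
  -- split products at l
  have hprodA : ∏ j, P (A j) = P (A l) * ∏ j ∈ Finset.univ.erase l, P (A j) :=
    (Finset.mul_prod_erase Finset.univ (fun j => P (A j)) (Finset.mem_univ l)).symm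
  have hprodS : ∏ j, P (S j) = P {ω | z < θ l ω} * ∏ j ∈ Finset.univ.erase l, P (A j) := by
    rw [← Finset.mul_prod_erase Finset.univ (fun j => P (S j)) (Finset.mem_univ l)]
    congr 1
    · simp [hS, Set.preimage, Set.mem_Ioi]
    · refine Finset.prod_congr rfl fun j hj => ?_
      rw [Finset.mem_erase] at hj
      simp [hS, hj.1]
  set Q := ∏ j ∈ Finset.univ.erase l, P (A j) with hQ
  have hb0 : P {ω | z < θ l ω} ≠ 0 := hl.ne'
  have hbtop : P {ω | z < θ l ω} ≠ ⊤ := measure_ne_top P _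
  have hAl : P (A l) = P {ω | θ l ω ≤ z} := by
    rfl
  calc P ({ω | I ω = i} ∩ {ω | θ i ω ≤ z})
      ≤ P {ω | θ l ω ≤ z} * Q := by
        rw [← hAl]; exact step1.trans (le_of_eq (step2.trans hprodA))
    _ = (P {ω | θ l ω ≤ z} / P {ω | z < θ l ω}) * (P {ω | z < θ l ω} * Q) := by
        rw [← mul_assoc, ENNReal.div_mul_cancel hb0 hbtop]
    _ ≤ (P {ω | θ l ω ≤ z} / P {ω | z < θ l ω}) * P {ω | I ω = l} := by
        refine mul_le_mul_right ?_ _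
        rw [← hprodS, ← step3]; exact step4
end

section
/- If an arm i belongs to I_{5ε} (i.e., there exists a player p with Δ_i^p > 5ε), then Δ_i^max ≤ 2·Δ_i^min. -/
/-- For a `5ε`-subpar arm, the maximal gap is at most twice the minimal gap. -/
theorem stmt_12 (M K : ℕ) (hM : 1 ≤ M) (hK : 1 ≤ K) (ε : ℝ) (hε : 0 ≤ ε)
    (μ : Fin K → Fin M → ℝ) (hμ : ∀ i p q, |μ i p - μ i q| ≤ ε)
    (Δ : Fin K → Fin M → ℝ) (hΔ : ∀ i p, Δ i p = (⨆ j, μ j p) - μ i p)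
    (i : Fin K) (hi : ∃ p, 5 * ε < Δ i p) :
    (⨆ p, Δ i p) ≤ 2 * ⨅ p, Δ i p := by
  haveI : Nonempty (Fin M) := ⟨⟨0, hM⟩⟩
  haveI : Nonempty (Fin K) := ⟨⟨0, hK⟩⟩
  obtain ⟨p0, hp0⟩ := hi
  have hsup : ∀ p q : Fin M, (⨆ j, μ j p) ≤ (⨆ j, μ j q) + ε := by
    intro p q
    apply ciSup_le
    intro j
    have h1 : μ j p - μ j q ≤ ε := (abs_le.mp (hμ j p q)).2
    have h2 : μ j q ≤ ⨆ j, μ j q :=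
      le_ciSup (f := fun j => μ j q) (Set.Finite.bddAbove (Set.finite_range _)) j
    linarith
  have hdiff : ∀ p q : Fin M, Δ i p ≤ Δ i q + 2 * ε := by
    intro p q
    have h1 := hsup p q
    have h2 : μ i q - μ i p ≤ ε := (abs_le.mp (hμ i q p)).2
    rw [hΔ i p, hΔ i q]; linarith
  have hlow : ∀ q : Fin M, 3 * ε < Δ i q := by
    intro q
    have := hdiff p0 q
    linarith
  apply ciSup_le
  intro p
  have h : Δ i p / 2 ≤ ⨅ q, Δ i q := by
    apply le_ciInf
    intro q
    have h1 := hdiff p q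
    have h2 := hlow q
    linarith
  linarith
end

section
/- If an arm i belongs to I_{5ε} (i.e., there exists a player p with Δ_i^p > 5ε), then Δ_i^q > 0 for every player q, and 1/Δ_i^min ≤ (2/M) · Σ_{p ∈ [M]} 1/Δ_i^p. -/
/-- For a `5ε`-subpar arm, all gaps are positive, and the reciprocal of the
minimal gap is at most `(2/M)` times the sum of reciprocal gaps. -/
theorem stmt_13 (M K : ℕ) (hM : 1 ≤ M) (hK : 1 ≤ K) (ε : ℝ) (hε : 0 ≤ ε)
    (μ : Fin K → Fin M → ℝ) (hμ : ∀ i p q, |μ i p - μ i q| ≤ ε)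
    (Δ : Fin K → Fin M → ℝ) (hΔ : ∀ i p, Δ i p = (⨆ j, μ j p) - μ i p)
    (i : Fin K) (hi : ∃ p, 5 * ε < Δ i p) :
    (∀ q : Fin M, 0 < Δ i q) ∧
      1 / (⨅ p, Δ i p) ≤ (2 / (M : ℝ)) * ∑ p, 1 / Δ i p := by
  have hKne : Nonempty (Fin K) := ⟨⟨0, hK⟩⟩
  have hMne : Nonempty (Fin M) := ⟨⟨0, hM⟩⟩
  obtain ⟨p₀, hp₀⟩ := hi
  -- key comparison lemma
  have key : ∀ p q : Fin M, Δ i p ≤ Δ i q + 2 * ε := by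
    intro p q
    have hsup : (⨆ j, μ j p) ≤ (⨆ j, μ j q) + ε := by
      refine ciSup_le fun j => ?_
      have h1 : μ j p - μ j q ≤ ε := (abs_sub_le_iff.mp (hμ j p q)).1
      have h2 : μ j q ≤ ⨆ j', μ j' q := le_ciSup (Finite.bddAbove_range fun j' => μ j' q) j
      linarith
    have h3 : μ i q - μ i p ≤ ε := (abs_sub_le_iff.mp (hμ i q p)).1
    rw [hΔ i p, hΔ i q]
    linarith
  -- positivity
  have hpos : ∀ q : Fin M, 3 * ε < Δ i q := by
    intro q
    have := key p₀ q
    linarith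
  have hpos' : ∀ q : Fin M, 0 < Δ i q := fun q => lt_of_le_of_lt (by linarith) (hpos q)
  refine ⟨hpos', ?_⟩
  -- minimizer
  obtain ⟨q₀, hq₀⟩ := Finite.exists_min (Δ i)
  have hinf : (⨅ p, Δ i p) = Δ i q₀ :=
    le_antisymm (ciInf_le (Finite.bddBelow_range _) q₀) (le_ciInf hq₀)
  rw [hinf]
  have hq₀pos : 0 < Δ i q₀ := hpos' q₀
  have hq₀eps : 3 * ε < Δ i q₀ := hpos q₀
  -- each term bound
  have hterm : ∀ p : Fin M, 1 / (2 * Δ i q₀) ≤ 1 / Δ i p := by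
    intro p
    apply one_div_le_one_div_of_le (hpos' p)
    have := key p q₀
    linarith
  have hsum : (M : ℝ) * (1 / (2 * Δ i q₀)) ≤ ∑ p, 1 / Δ i p := by
    calc (M : ℝ) * (1 / (2 * Δ i q₀)) = ∑ _p : Fin M, 1 / (2 * Δ i q₀) := by
          rw [Finset.sum_const, Finset.card_univ, Fintype.card_fin, nsmul_eq_mul]
      _ ≤ ∑ p, 1 / Δ i p := Finset.sum_le_sum fun p _ => hterm p
  have hMpos : (0 : ℝ) < M := by exact_mod_cast hM
  have h2M : 0 < 2 / (M : ℝ) := by positivity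
  calc 1 / Δ i q₀ = (2 / (M : ℝ)) * ((M : ℝ) * (1 / (2 * Δ i q₀))) := by
        field_simp
    _ ≤ (2 / (M : ℝ)) * ∑ p, 1 / Δ i p := by
        exact mul_le_mul_of_nonneg_left hsum (le_of_lt h2M)
end

section
/- Let i ∈ I_{10ε} (i.e., there exists a player with Δ_i^p > 10ε) and let † ∈ I_{2ε}^C be an arm with Δ_†^p ≤ 2ε for every player p. Define δ_i^p = μ_†^p − μ_i^p. Then for every player p ∈ [M]: (3/4)·Δ_i^p < δ_i^p ≤ Δ_i^p; in particular δ_i^p > 0. -/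
/-- Fact A.2 (fact:small_delta): for a `10ε`-subpar arm `i` and a common
near-optimal arm `†` with gaps at most `2ε`, `δ_i^p = μ_†^p − μ_i^p` satisfies
`(3/4)·Δ_i^p < δ_i^p ≤ Δ_i^p`. -/
theorem stmt_14 (M K : ℕ) (hM : 1 ≤ M) (hK : 1 ≤ K) (ε : ℝ) (hε : 0 ≤ ε)
    (μ : Fin K → Fin M → ℝ) (hμ : ∀ i p q, |μ i p - μ i q| ≤ ε)
    (Δ : Fin K → Fin M → ℝ) (hΔ : ∀ i p, Δ i p = (⨆ j, μ j p) - μ i p)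
    (i : Fin K) (hi : ∃ p, 10 * ε < Δ i p)
    (dag : Fin K) (hdag : ∀ p, Δ dag p ≤ 2 * ε) :
    ∀ p : Fin M,
      (3 / 4) * Δ i p < μ dag p - μ i p ∧ μ dag p - μ i p ≤ Δ i p := by
  have hKne : Nonempty (Fin K) := ⟨⟨0, hK⟩⟩
  have hbdd : ∀ p : Fin M, BddAbove (Set.range fun j => μ j p) :=
    fun p => (Set.finite_range _).bddAbove
  have hle : ∀ (j : Fin K) (p : Fin M), μ j p ≤ ⨆ j, μ j p :=
    fun j p => le_ciSup (hbdd p) j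
  have hsup : ∀ p q : Fin M, (⨆ j, μ j p) ≤ (⨆ j, μ j q) + ε := by
    intro p q
    refine ciSup_le fun j => ?_
    have h := abs_le.mp (hμ j p q)
    linarith [hle j q]
  intro p
  obtain ⟨q, hq⟩ := hi
  have h1 : Δ i p ≤ μ dag p - μ i p + 2 * ε := by
    have h := hdag p; rw [hΔ] at h ⊢; linarith
  have h2 : Δ i q ≤ Δ i p + 2 * ε := by
    rw [hΔ, hΔ]
    have ha := abs_le.mp (hμ i p q)
    have hb := hsup q p
    linarith
  have h3 : μ dag p - μ i p ≤ Δ i p := by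
    rw [hΔ]; linarith [hle dag p]
  exact ⟨by linarith, h3⟩
end

section
/- Σ_{t ∈ S} h(t) ≤ h(1) + Σ_{t ∈ S} h(t+1). -/
/-- Abstract form of the paper's Lemma C.6 (lem:auxiliary_sum_h): for a
nonnegative function `h` that is block-invariant with respect to the set `S` of
pull rounds `π 1 < ⋯ < π m` (with `π 0 = 0`),
`Σ_{t ∈ S} h(t) ≤ h(1) + Σ_{t ∈ S} h(t+1)`. -/
theorem stmt_15 (T m : ℕ) (hT : 1 ≤ T) (S : Finset ℕ)
    (hST : ∀ t ∈ S, 1 ≤ t ∧ t ≤ T)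
    (π : ℕ → ℕ) (hπ0 : π 0 = 0)
    (hπmono : ∀ k l : ℕ, k < l → l ≤ m → π k < π l)
    (hπS : ∀ t, t ∈ S ↔ ∃ k, 1 ≤ k ∧ k ≤ m ∧ π k = t)
    (h : ℕ → ℝ) (hh0 : ∀ t, 0 ≤ h t)
    (hinv : ∀ k, 1 ≤ k → k ≤ m → ∀ t, π (k - 1) + 1 ≤ t → t < π k → h t = h (t + 1)) :
    ∑ t ∈ S, h t ≤ h 1 + ∑ t ∈ S, h (t + 1) := by
  -- S is the image of π on Icc 1 m
  have hS : S = (Finset.Icc 1 m).image π := by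
    ext t
    simp only [Finset.mem_image, Finset.mem_Icc, hπS]
    constructor
    · rintro ⟨k, h1, h2, h3⟩; exact ⟨k, ⟨h1, h2⟩, h3⟩
    · rintro ⟨k, ⟨h1, h2⟩, h3⟩; exact ⟨k, h1, h2, h3⟩
  have hinj : ∀ x ∈ Finset.Icc 1 m, ∀ y ∈ Finset.Icc 1 m, π x = π y → x = y := by
    intro x hx y hy hxy
    simp only [Finset.mem_Icc] at hx hy
    rcases lt_trichotomy x y with hlt | heq | hgt
    · exact absurd hxy (Nat.ne_of_lt (hπmono x y hlt hy.2))
    · exact heq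
    · exact absurd hxy.symm (Nat.ne_of_lt (hπmono y x hgt hx.2))
  have hsum : ∀ f : ℕ → ℝ, ∑ t ∈ S, f t = ∑ k ∈ Finset.Icc 1 m, f (π k) := by
    intro f
    rw [hS, Finset.sum_image hinj]
  -- block invariance: h (π (k-1) + 1) = h (π k) on blocks
  have hblock : ∀ k, 1 ≤ k → k ≤ m → ∀ t, π (k - 1) + 1 ≤ t → t ≤ π k → h t = h (π k) := by
    intro k h1 h2 t
    intro ht1 ht2
    induction' hd : π k - t with n ih generalizing t
    · have : t = π k := le_antisymm ht2 (Nat.le_of_sub_eq_zero hd)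
      rw [this]
    · have hlt : t < π k := Nat.lt_of_sub_eq_succ hd
      rw [hinv k h1 h2 t ht1 hlt]
      exact ih (t + 1) (le_trans ht1 (Nat.le_succ t)) hlt (by omega)
  rw [hsum h, hsum (fun t => h (t + 1))]
  -- replace h (π k) by h (π (k-1) + 1)
  have heq : ∑ k ∈ Finset.Icc 1 m, h (π k) = ∑ k ∈ Finset.Icc 1 m, h (π (k - 1) + 1) := by
    apply Finset.sum_congr rfl
    intro k hk
    simp only [Finset.mem_Icc] at hk
    have hle : π (k - 1) + 1 ≤ π k := by
      have := hπmono (k - 1) k (by omega) hk.2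
      omega
    exact (hblock k hk.1 hk.2 (π (k - 1) + 1) le_rfl hle).symm
  rw [heq]
  -- convert Icc to range
  have hIcc : Finset.Icc 1 m = Finset.Ico 1 (m + 1) := by
    rw [Finset.Ico_add_one_right_eq_Icc]
  rw [hIcc, Finset.sum_Ico_eq_sum_range, Finset.sum_Ico_eq_sum_range]
  simp only [Nat.add_sub_cancel]
  -- now sums over range m
  cases m with
  | zero => simp [hh0 1]
  | succ n =>
    rw [Finset.sum_range_succ' (fun i => h (π (1 + i - 1) + 1)) n]
    simp only [Nat.add_sub_cancel_left, hπ0]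
    rw [show (0:ℕ) + 1 = 1 from rfl, add_comm]
    apply add_le_add_right
    have hcong : ∀ x ∈ Finset.range n, h (π (x + 1) + 1) = (fun i => h (π (1 + i) + 1)) x := by
      intro x _; simp [Nat.add_comm]
    rw [Finset.sum_congr rfl hcong]
    apply Finset.sum_le_sum_of_subset_of_nonneg
    · exact Finset.range_subset_range.2 (Nat.le_succ n)
    · intro i _ _; exact hh0 _
end

section
/- Let N ≥ 1 be an integer. Then Σ_{t ∈ S} h(t) · 1{ |S ∩ {1,…,t−1}| < N } ≤ h(1) + Σ_{k=1}^{min(m, N−1)} h(π_k + 1). -/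
/-- Abstract form of the paper's Lemma C.4 (lem:auxiliary_sum_g_indic): for a
nonnegative function `h` that is block-invariant with respect to the set `S` of
pull rounds `π 1 < ⋯ < π m` (with `π 0 = 0`), restricting the sum to rounds in
which the number of previous pulls is below `N` gives
`Σ_{t ∈ S} h(t)·1{|S ∩ [1,t−1]| < N} ≤ h(1) + Σ_{k=1}^{min(m,N−1)} h(π k + 1)`. -/
theorem stmt_16 (T m : ℕ) (hT : 1 ≤ T) (S : Finset ℕ)
    (hST : ∀ t ∈ S, 1 ≤ t ∧ t ≤ T)
    (π : ℕ → ℕ) (hπ0 : π 0 = 0)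
    (hπmono : ∀ k l : ℕ, k < l → l ≤ m → π k < π l)
    (hπS : ∀ t, t ∈ S ↔ ∃ k, 1 ≤ k ∧ k ≤ m ∧ π k = t)
    (h : ℕ → ℝ) (hh0 : ∀ t, 0 ≤ h t)
    (hinv : ∀ k, 1 ≤ k → k ≤ m → ∀ t, π (k - 1) + 1 ≤ t → t < π k → h t = h (t + 1))
    (N : ℕ) (hN : 1 ≤ N) :
    ∑ t ∈ S.filter (fun t => (S.filter (fun s => s < t)).card < N), h t ≤
      h 1 + ∑ k ∈ Finset.Icc 1 (min m (N - 1)), h (π k + 1) := by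
  -- block invariance: h (π (k-1) + 1) = h (π k)
  have hblock : ∀ k, 1 ≤ k → k ≤ m → h (π (k - 1) + 1) = h (π k) := by
    intro k hk1 hkm
    have hlt : π (k - 1) < π k := hπmono _ _ (by omega) hkm
    have key : ∀ d, π (k - 1) + 1 + d ≤ π k → h (π (k - 1) + 1) = h (π (k - 1) + 1 + d) := by
      intro d
      induction d with
      | zero => simp
      | succ n ih =>
        intro hd
        have hstep := hinv k hk1 hkm (π (k - 1) + 1 + n) (by omega) (by omega)
        rw [ih (by omega), hstep]
        congr 1
    have hk := key (π k - (π (k - 1) + 1)) (by omega)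
    rw [hk]; congr 1; omega
  have hinj : ∀ a ∈ Finset.Icc 1 m, ∀ b ∈ Finset.Icc 1 m, π a = π b → a = b := by
    intro a ha b hb hab
    simp only [Finset.mem_Icc] at ha hb
    rcases lt_trichotomy a b with hl | he | hl
    · exact absurd hab (Nat.ne_of_lt (hπmono a b hl hb.2))
    · exact he
    · exact absurd hab.symm (Nat.ne_of_lt (hπmono b a hl ha.2))
  have hcard : ∀ k, 1 ≤ k → k ≤ m → (S.filter (fun s => s < π k)).card = k - 1 := by
    intro k hk1 hkm
    have hset : S.filter (fun s => s < π k) = (Finset.Icc 1 (k - 1)).image π := by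
      ext t
      simp only [Finset.mem_filter, Finset.mem_image, Finset.mem_Icc, hπS]
      constructor
      · rintro ⟨⟨j, hj1, hjm, rfl⟩, hlt⟩
        refine ⟨j, ⟨hj1, ?_⟩, rfl⟩
        by_contra hc
        push_neg at hc
        have : k ≤ j := by omega
        rcases eq_or_lt_of_le this with he | hl
        · rw [he] at hlt; omega
        · exact absurd hlt (not_lt.mpr (le_of_lt (hπmono k j hl hjm)))
      · rintro ⟨j, ⟨hj1, hj2⟩, rfl⟩
        exact ⟨⟨j, hj1, by omega, rfl⟩, hπmono j k (by omega) hkm⟩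
    rw [hset, Finset.card_image_of_injOn, Nat.card_Icc]
    · omega
    · intro a ha b hb hab
      simp only [Finset.coe_Icc, Set.mem_Icc] at ha hb
      exact hinj a (Finset.mem_Icc.mpr ⟨ha.1, by omega⟩) b (Finset.mem_Icc.mpr ⟨hb.1, by omega⟩) hab
  have hLHSset : S.filter (fun t => (S.filter (fun s => s < t)).card < N)
      = (Finset.Icc 1 (min m N)).image π := by
    ext t
    simp only [Finset.mem_filter, Finset.mem_image, Finset.mem_Icc, hπS]
    constructor
    · rintro ⟨⟨j, hj1, hjm, rfl⟩, hlt⟩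
      rw [hcard j hj1 hjm] at hlt
      exact ⟨j, ⟨hj1, by omega⟩, rfl⟩
    · rintro ⟨j, ⟨hj1, hj2⟩, rfl⟩
      have hjm : j ≤ m := by omega
      refine ⟨⟨j, hj1, hjm, rfl⟩, ?_⟩
      rw [hcard j hj1 hjm]; omega
  rw [hLHSset, Finset.sum_image (fun a ha b hb => hinj a
    (Finset.mem_Icc.mpr ⟨(Finset.mem_Icc.mp ha).1, le_trans (Finset.mem_Icc.mp ha).2 (min_le_left _ _)⟩)
    b (Finset.mem_Icc.mpr ⟨(Finset.mem_Icc.mp hb).1, le_trans (Finset.mem_Icc.mp hb).2 (min_le_left _ _)⟩))]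
  rcases Nat.eq_zero_or_pos (min m N) with hM0 | hM1
  · rw [hM0]
    simp only [Finset.Icc_eq_empty_of_lt (by omega : (1:ℕ) > 0), Finset.sum_empty]
    have : 0 ≤ ∑ k ∈ Finset.Icc 1 (min m (N - 1)), h (π k + 1) :=
      Finset.sum_nonneg fun k _ => hh0 _
    linarith [hh0 1]
  · have step1 : ∑ k ∈ Finset.Icc 1 (min m N), h (π k) = ∑ k ∈ Finset.Icc 1 (min m N), h (π (k - 1) + 1) :=
      Finset.sum_congr rfl fun k hk => by
        have hk' := Finset.mem_Icc.mp hk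
        exact (hblock k hk'.1 (le_trans hk'.2 (min_le_left _ _))).symm
    rw [step1]
    have step2 : ∑ k ∈ Finset.Icc 1 (min m N), h (π (k - 1) + 1)
        = ∑ j ∈ Finset.Icc 0 ((min m N) - 1), h (π j + 1) := by
      apply Finset.sum_nbij' (fun k => k - 1) (fun j => j + 1)
      · intro a ha; simp only [Finset.mem_Icc] at *; omega
      · intro a ha; simp only [Finset.mem_Icc] at *; omega
      · intro a ha; simp only [Finset.mem_Icc] at ha; omega
      · intro a ha; simp only [Finset.mem_Icc] at ha; omega
      · intro a ha; rfl
    rw [step2]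
    have hsplit : Finset.Icc 0 ((min m N) - 1) = insert 0 (Finset.Icc 1 ((min m N) - 1)) := by
      ext j; simp only [Finset.mem_insert, Finset.mem_Icc]; omega
    rw [hsplit, Finset.sum_insert (by simp)]
    have h01 : h (π 0 + 1) = h 1 := by rw [hπ0]
    rw [h01]
    have hsub : Finset.Icc 1 ((min m N) - 1) ⊆ Finset.Icc 1 (min m (N - 1)) := by
      intro j hj; simp only [Finset.mem_Icc] at *; omega
    exact add_le_add_right (Finset.sum_le_sum_of_subset_of_nonneg hsub
      fun k _ _ => hh0 _) _
end

section
/- For every integer l ≥ 1: Σ_{t=1}^{T} Σ_{p=1}^{M} a(t,p) · 1{ m^p(t−1) < l } ≤ l + M − 1. -/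
open Finset

namespace Stmt17Aux

variable (a : ℕ → ℕ → ℕ) (M l : ℕ)

def nn (t : ℕ) : ℕ := ∑ s ∈ Icc 1 t, ∑ p ∈ Icc 1 M, a s p

def uu (p t : ℕ) : ℕ := WithBot.unbotD 0 (((Icc 1 t).filter (fun s => a s p = 1)).max)

lemma nn_succ (t : ℕ) : nn a M (t+1) = nn a M t + ∑ p ∈ Icc 1 M, a (t+1) p := by
  unfold nn; rw [Finset.sum_Icc_succ_top (by omega : 1 ≤ t + 1)]

lemma uu_le (p t : ℕ) : uu a p t ≤ t := by
  unfold uu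
  rcases h : (((Icc 1 t).filter (fun s => a s p = 1)).max) with _ | m
  · exact Nat.zero_le t
  · have hm := Finset.mem_of_max h
    simp only [Finset.mem_filter, Finset.mem_Icc] at hm
    show m ≤ t
    exact hm.1.2

lemma uu_mem (p t : ℕ) (h : uu a p t ≠ 0) :
    uu a p t ∈ (Icc 1 t).filter (fun s => a s p = 1) := by
  unfold uu at h ⊢
  rcases hmax : (((Icc 1 t).filter (fun s => a s p = 1)).max) with _ | m
  · rw [hmax] at h
    exact absurd rfl h
  · show m ∈ _
    exact Finset.mem_of_max hmax

lemma uu_succ_one (p t : ℕ) (h : a (t+1) p = 1) : uu a p (t+1) = t + 1 := by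
  unfold uu
  have hmem : t + 1 ∈ (Icc 1 (t+1)).filter (fun s => a s p = 1) := by
    simp [Finset.mem_filter, Finset.mem_Icc, h]
  rcases hmax : (((Icc 1 (t+1)).filter (fun s => a s p = 1)).max) with _ | m
  · exact absurd (Finset.max_eq_bot.mp hmax ▸ hmem) (by simp)
  · have h1 := Finset.mem_of_max hmax
    simp only [Finset.mem_filter, Finset.mem_Icc] at h1
    have h2 := Finset.le_max hmem
    rw [hmax, WithBot.some_eq_coe] at h2
    have h3 : t + 1 ≤ m := by exact_mod_cast h2
    show m = t + 1
    omega

lemma uu_succ_zero (p t : ℕ) (h : a (t+1) p = 0) : uu a p (t+1) = uu a p t := by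
  have hset : (Icc 1 (t+1)).filter (fun s => a s p = 1)
      = (Icc 1 t).filter (fun s => a s p = 1) := by
    ext s
    simp only [Finset.mem_filter, Finset.mem_Icc]
    constructor
    · rintro ⟨⟨h1, h2⟩, h3⟩
      refine ⟨⟨h1, ?_⟩, h3⟩
      by_contra hc
      have : s = t + 1 := by omega
      subst this; omega
    · rintro ⟨⟨h1, h2⟩, h3⟩; exact ⟨⟨h1, by omega⟩, h3⟩
  unfold uu; rw [hset]

def Ap (p t : ℕ) : ℕ := if 1 ≤ uu a p t then 1 else 0

def Gp (p t : ℕ) : ℕ :=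
  ((Icc 1 t).filter (fun s => a s p = 1 ∧ nn a M s < l ∧ s ≠ uu a p t)).card

lemma step (ha : ∀ t p, a t p = 0 ∨ a t p = 1) (p t : ℕ) :
    Ap a p t + Gp a M l p t + a (t+1) p * (if nn a M (uu a p t) < l then 1 else 0)
      ≤ Ap a p (t+1) + Gp a M l p (t+1) := by
  rcases ha (t+1) p with h0 | h1
  · -- no pull at t+1
    have hu := uu_succ_zero a p t h0
    have hG : Gp a M l p (t+1) = Gp a M l p t := by
      unfold Gp
      congr 1
      ext s
      simp only [Finset.mem_filter, Finset.mem_Icc, hu]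
      constructor
      · rintro ⟨⟨h1, h2⟩, h3, h4, h5⟩
        refine ⟨⟨h1, ?_⟩, h3, h4, h5⟩
        by_contra hc
        have : s = t + 1 := by omega
        subst this; omega
      · rintro ⟨⟨h1, h2⟩, h3⟩; exact ⟨⟨h1, by omega⟩, h3⟩
    unfold Ap
    rw [hu, hG, h0]
    omega
  · -- pull at t+1
    have hu := uu_succ_one a p t h1
    have hG : Gp a M l p (t+1)
        = ((Icc 1 t).filter (fun s => a s p = 1 ∧ nn a M s < l)).card := by
      unfold Gp
      congr 1
      ext s
      simp only [Finset.mem_filter, Finset.mem_Icc, hu]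
      constructor
      · rintro ⟨⟨h1', h2⟩, h3, h4, h5⟩
        exact ⟨⟨h1', by omega⟩, h3, h4⟩
      · rintro ⟨⟨h1', h2⟩, h3, h4⟩
        exact ⟨⟨h1', by omega⟩, h3, h4, by omega⟩
    have hsub : (Icc 1 t).filter (fun s => a s p = 1 ∧ nn a M s < l ∧ s ≠ uu a p t)
        ⊆ (Icc 1 t).filter (fun s => a s p = 1 ∧ nn a M s < l) := by
      intro s hs
      simp only [Finset.mem_filter] at *
      exact ⟨hs.1, hs.2.1, hs.2.2.1⟩
    have hA1 : Ap a p (t+1) = 1 := by unfold Ap; rw [hu]; simp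
    by_cases hearly : nn a M (uu a p t) < l
    · by_cases hz : uu a p t = 0
      · have hA0 : Ap a p t = 0 := by unfold Ap; rw [hz]; simp
        have := Finset.card_le_card hsub
        unfold Gp at *
        rw [hA0, hA1, hG, h1]
        simp only [hearly, if_pos]
        omega
      · -- uu ≥ 1 : the previous pull becomes available
        have hmem := uu_mem a p t hz
        simp only [Finset.mem_filter, Finset.mem_Icc] at hmem
        have hnotmem : uu a p t ∉
            (Icc 1 t).filter (fun s => a s p = 1 ∧ nn a M s < l ∧ s ≠ uu a p t) := by
          simp [Finset.mem_filter]
        have hins : insert (uu a p t)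
            ((Icc 1 t).filter (fun s => a s p = 1 ∧ nn a M s < l ∧ s ≠ uu a p t))
            ⊆ (Icc 1 t).filter (fun s => a s p = 1 ∧ nn a M s < l) := by
          intro s hs
          rcases Finset.mem_insert.mp hs with hs | hs
          · subst hs
            simp only [Finset.mem_filter, Finset.mem_Icc]
            exact ⟨hmem.1, hmem.2, hearly⟩
          · exact hsub hs
        have hcard := Finset.card_le_card hins
        rw [Finset.card_insert_of_notMem hnotmem] at hcard
        have hA : Ap a p t = 1 := by unfold Ap; simp [Nat.one_le_iff_ne_zero, hz]
        unfold Gp at *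
        rw [hA, hA1, hG, h1]
        simp only [hearly, if_pos]
        omega
    · have := Finset.card_le_card hsub
      have hAle : Ap a p t ≤ 1 := by unfold Ap; split <;> omega
      unfold Gp at *
      rw [hA1, hG, h1]
      simp only [hearly, if_neg, not_false_iff]
      omega

def Ct (t : ℕ) : ℕ :=
  ∑ s ∈ Icc 1 t, ∑ p ∈ Icc 1 M,
    a s p * (if nn a M (uu a p (s-1)) < l then 1 else 0)

lemma Ct_le (ha : ∀ t p, a t p = 0 ∨ a t p = 1) (t : ℕ) :
    Ct a M l t ≤ (∑ p ∈ Icc 1 M, Ap a p t) + (∑ p ∈ Icc 1 M, Gp a M l p t) := by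
  induction t with
  | zero => simp [Ct]
  | succ t ih =>
    have hCt : Ct a M l (t+1) = Ct a M l t
        + ∑ p ∈ Icc 1 M, a (t+1) p * (if nn a M (uu a p t) < l then 1 else 0) := by
      unfold Ct
      rw [Finset.sum_Icc_succ_top (by omega : 1 ≤ t + 1)]
      simp
    rw [hCt]
    calc Ct a M l t + ∑ p ∈ Icc 1 M, a (t+1) p * (if nn a M (uu a p t) < l then 1 else 0)
        ≤ (∑ p ∈ Icc 1 M, Ap a p t) + (∑ p ∈ Icc 1 M, Gp a M l p t)
          + ∑ p ∈ Icc 1 M, a (t+1) p * (if nn a M (uu a p t) < l then 1 else 0) := by omega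
      _ = ∑ p ∈ Icc 1 M, (Ap a p t + Gp a M l p t
            + a (t+1) p * (if nn a M (uu a p t) < l then 1 else 0)) := by
          rw [Finset.sum_add_distrib, Finset.sum_add_distrib]
      _ ≤ ∑ p ∈ Icc 1 M, (Ap a p (t+1) + Gp a M l p (t+1)) := by
          exact Finset.sum_le_sum fun p _ => step a M l ha p t
      _ = (∑ p ∈ Icc 1 M, Ap a p (t+1)) + (∑ p ∈ Icc 1 M, Gp a M l p (t+1)) := by
          rw [Finset.sum_add_distrib]

def Ht (t : ℕ) : ℕ :=
  ∑ s ∈ Icc 1 t, if nn a M s < l then (∑ p ∈ Icc 1 M, a s p) else 0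

lemma Ht_le (hl : 1 ≤ l) (t : ℕ) :
    Ht a M l t ≤ l - 1 ∧ (nn a M t < l → Ht a M l t ≤ nn a M t) := by
  induction t with
  | zero => simp [Ht, nn]
  | succ t ih =>
    have hH : Ht a M l (t+1) = Ht a M l t
        + (if nn a M (t+1) < l then (∑ p ∈ Icc 1 M, a (t+1) p) else 0) := by
      unfold Ht
      rw [Finset.sum_Icc_succ_top (by omega : 1 ≤ t + 1)]
    have hns := nn_succ a M t
    by_cases hcond : nn a M (t+1) < l
    · have hnt : nn a M t < l := by omega
      have h2 := ih.2 hnt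
      rw [hH]
      simp only [hcond, if_pos]
      constructor <;> omega
    · rw [hH]
      simp only [hcond, if_neg, not_false_iff]
      constructor
      · omega
      · intro h; omega

lemma Gp_sum_le (ha : ∀ t p, a t p = 0 ∨ a t p = 1) (hl : 1 ≤ l) (t : ℕ) :
    (∑ p ∈ Icc 1 M, Gp a M l p t) ≤ l - 1 := by
  have h1 : ∀ p, Gp a M l p t
      ≤ ∑ s ∈ Icc 1 t, (if nn a M s < l then a s p else 0) := by
    intro p
    have hsub : Gp a M l p t
        ≤ ((Icc 1 t).filter (fun s => a s p = 1 ∧ nn a M s < l)).card := by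
      apply Finset.card_le_card
      intro s hs
      simp only [Finset.mem_filter] at *
      exact ⟨hs.1, hs.2.1, hs.2.2.1⟩
    refine hsub.trans ?_
    rw [Finset.card_filter]
    apply Finset.sum_le_sum
    intro s _
    rcases ha s p with h | h <;> by_cases hc : nn a M s < l <;> simp [h, hc]
  calc (∑ p ∈ Icc 1 M, Gp a M l p t)
      ≤ ∑ p ∈ Icc 1 M, ∑ s ∈ Icc 1 t, (if nn a M s < l then a s p else 0) :=
        Finset.sum_le_sum fun p _ => h1 p
    _ = ∑ s ∈ Icc 1 t, ∑ p ∈ Icc 1 M, (if nn a M s < l then a s p else 0) :=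
        Finset.sum_comm
    _ = Ht a M l t := by
        unfold Ht
        refine Finset.sum_congr rfl fun s _ => ?_
        by_cases hc : nn a M s < l <;> simp [hc]
    _ ≤ l - 1 := (Ht_le a M l hl t).1

lemma Ap_sum_le (t : ℕ) : (∑ p ∈ Icc 1 M, Ap a p t) ≤ M := by
  calc (∑ p ∈ Icc 1 M, Ap a p t) ≤ ∑ p ∈ Icc 1 M, 1 := by
        apply Finset.sum_le_sum; intro p _; unfold Ap; split <;> omega
    _ = M := by simp

end Stmt17Aux


/-- Deterministic counting claim (Eq. A2_m_decomposition): once the total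
number of pulls of an arm reaches `l`, each of the `M` players can pull the arm
at most once more before its maintained aggregate count `m^p` reaches `l`. -/
theorem stmt_17 (T M : ℕ) (hT : 1 ≤ T) (hM : 1 ≤ M)
    (a : ℕ → ℕ → ℕ) (ha : ∀ t p, a t p = 0 ∨ a t p = 1)
    (n : ℕ → ℕ) (hn : ∀ t, n t = ∑ s ∈ Finset.Icc 1 t, ∑ p ∈ Finset.Icc 1 M, a s p)
    (u : ℕ → ℕ → ℕ)
    (hu : ∀ p t, u p t = WithBot.unbotD 0 ((Finset.Icc 1 t).filter (fun s => a s p = 1)).max)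
    (m : ℕ → ℕ → ℕ) (hm : ∀ p t, m p t = n (u p t)) :
    ∀ l : ℕ, 1 ≤ l →
      ∑ t ∈ Finset.Icc 1 T, ∑ p ∈ Finset.Icc 1 M,
          a t p * (if m p (t - 1) < l then 1 else 0) ≤ l + M - 1 := by
  intro l hl
  have hnn : ∀ t, n t = Stmt17Aux.nn a M t := by
    intro t; rw [hn]; rfl
  have huu : ∀ p t, u p t = Stmt17Aux.uu a p t := by
    intro p t; rw [hu]; rfl
  have hm' : ∀ p t, m p t = Stmt17Aux.nn a M (Stmt17Aux.uu a p t) := by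
    intro p t; rw [hm, hnn, huu]
  have hLHS : (∑ t ∈ Finset.Icc 1 T, ∑ p ∈ Finset.Icc 1 M,
      a t p * (if m p (t - 1) < l then 1 else 0)) = Stmt17Aux.Ct a M l T := by
    unfold Stmt17Aux.Ct
    refine Finset.sum_congr rfl fun t _ => Finset.sum_congr rfl fun p _ => ?_
    rw [hm']
  rw [hLHS]
  have h1 := Stmt17Aux.Ct_le a M l ha T
  have h2 := Stmt17Aux.Ap_sum_le a M T
  have h3 := Stmt17Aux.Gp_sum_le a M l ha hl T
  omega
end

section
/- There is a universal constant c > 0 with the following property. Let α > 0, let T ≥ 2 be an integer, let a ≥ 1 and C ≥ 0 be reals, and assume Δ_i^p ≤ 2·Δ_i^min for every arm i ∈ I_α and every player p. Let n : Fin K → Fin M → ℝ be nonnegative (n_i^p represents the expected number of pulls of arm i by player p) and satisfy: (i) Σ_{p ∈ [M]} n_i^p ≤ a·( ln T/(Δ_i^min)² + M ) for every i ∈ I_α; and (ii) n_i^p ≤ a·( ln T/(Δ_i^p)² + C ) for every i ∈ I_α^C and every p with Δ_i^p > 0. Then Σ_{i ∈ [K]} Σ_{p ∈ [M]} n_i^p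 · Δ_i^p ≤ c·a·( (1/M)·Σ_{i ∈ I_α} Σ_{p: Δ_i^p > 0} (ln T)/Δ_i^p + Σ_{i ∈ I_α^C} Σ_{p: Δ_i^p > 0} (ln T)/Δ_i^p + M·K·(1+C) ). -/
/-- Gap-dependent part of the paper's Lemma C.8 (lem:arm-pull-reg): per-arm
expected pull-count bounds imply the gap-dependent collective regret bound. -/
theorem stmt_18 : ∃ c : ℝ, 0 < c ∧
    ∀ (M K : ℕ), 1 ≤ M → 1 ≤ K →
    ∀ ε : ℝ, 0 ≤ ε →
    ∀ μ : Fin K → Fin M → ℝ,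
      (∀ i p q, |μ i p - μ i q| ≤ ε) →
      (∀ i p, 0 ≤ μ i p) → (∀ i p, μ i p ≤ 1) →
    ∀ Δ : Fin K → Fin M → ℝ, (∀ i p, Δ i p = (⨆ j, μ j p) - μ i p) →
    ∀ Δmin : Fin K → ℝ, (∀ i, Δmin i = ⨅ p, Δ i p) →
    ∀ α : ℝ, 0 < α →
    ∀ Iα : Finset (Fin K), (∀ i, i ∈ Iα ↔ ∃ p, α < Δ i p) →
    ∀ T : ℕ, 2 ≤ T →
    ∀ a C : ℝ, 1 ≤ a → 0 ≤ C →
    (∀ i ∈ Iα, ∀ p, Δ i p ≤ 2 * Δmin i) →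
    ∀ n : Fin K → Fin M → ℝ, (∀ i p, 0 ≤ n i p) →
    (∀ i ∈ Iα, ∑ p, n i p ≤ a * (Real.log T / (Δmin i) ^ 2 + M)) →
    (∀ i ∉ Iα, ∀ p, 0 < Δ i p → n i p ≤ a * (Real.log T / (Δ i p) ^ 2 + C)) →
    ∑ i, ∑ p, n i p * Δ i p ≤
      c * a * ((1 / (M : ℝ)) *
          ∑ i ∈ Iα, ∑ p ∈ Finset.univ.filter (fun p => 0 < Δ i p),
            Real.log T / Δ i p
        + ∑ i ∈ Iαᶜ, ∑ p ∈ Finset.univ.filter (fun p => 0 < Δ i p),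
            Real.log T / Δ i p
        + (M : ℝ) * K * (1 + C)) := by
  refine ⟨4, by norm_num, ?_⟩
  intro M K hM1 hK1 ε hε μ hεdiff hμ0 hμ1 Δ hΔ Δmin hΔmin α hα Iα hIα T hT a C ha hC
    h2 n hn hsub hnsub
  haveI : Nonempty (Fin M) := ⟨⟨0, hM1⟩⟩
  haveI : Nonempty (Fin K) := ⟨⟨0, hK1⟩⟩
  have hMpos : (0 : ℝ) < M := by exact_mod_cast hM1
  have ha0 : (0 : ℝ) ≤ a := by linarith
  set L : ℝ := Real.log T with hLdef
  have hL : 0 ≤ L := Real.log_nonneg (by exact_mod_cast hT.trans' (by norm_num))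
  have hΔnn : ∀ i p, 0 ≤ Δ i p := by
    intro i p
    rw [hΔ]
    have : μ i p ≤ ⨆ j, μ j p :=
      le_ciSup (Set.Finite.bddAbove (Set.finite_range fun j => μ j p)) i
    linarith
  have hΔ1 : ∀ i p, Δ i p ≤ 1 := by
    intro i p
    rw [hΔ]
    have : (⨆ j, μ j p) ≤ 1 := ciSup_le fun j => hμ1 j p
    linarith [hμ0 i p]
  have hΔminle : ∀ i p, Δmin i ≤ Δ i p := by
    intro i p
    rw [hΔmin]
    exact ciInf_le (Set.Finite.bddBelow (Set.finite_range _)) p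
  have hΔminpos : ∀ i ∈ Iα, 0 < Δmin i := by
    intro i hi
    obtain ⟨p, hp⟩ := (hIα i).1 hi
    have := h2 i hi p
    linarith
  have hΔmin1 : ∀ i, Δmin i ≤ 1 := fun i =>
    (hΔminle i ⟨0, hM1⟩).trans (hΔ1 i ⟨0, hM1⟩)
  -- per-arm bounds
  set S : Fin K → ℝ := fun i =>
    ∑ p ∈ Finset.univ.filter (fun p => 0 < Δ i p), L / Δ i p with hSdef
  have hSnn : ∀ i, 0 ≤ S i := by
    intro i
    apply Finset.sum_nonneg
    intro p hp
    exact div_nonneg hL (hΔnn i p)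
  have hsubbound : ∀ i ∈ Iα, ∑ p, n i p * Δ i p ≤ 4 * a * (1 / M) * S i + 2 * a * M := by
    intro i hi
    have hd : 0 < Δmin i := hΔminpos i hi
    have step1 : ∑ p, n i p * Δ i p ≤ (2 * Δmin i) * ∑ p, n i p := by
      rw [Finset.mul_sum]
      apply Finset.sum_le_sum
      intro p _
      calc n i p * Δ i p ≤ n i p * (2 * Δmin i) :=
            mul_le_mul_of_nonneg_left (h2 i hi p) (hn i p)
        _ = 2 * Δmin i * n i p := by ring
    have step2 : (2 * Δmin i) * ∑ p, n i p ≤ 2 * a * (L / Δmin i) + 2 * a * M := by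
      have := hsub i hi
      have h1 : (2 * Δmin i) * ∑ p, n i p ≤ (2 * Δmin i) * (a * (L / (Δmin i) ^ 2 + M)) :=
        mul_le_mul_of_nonneg_left this (by linarith)
      have h2' : (2 * Δmin i) * (a * (L / (Δmin i) ^ 2 + M)) =
          2 * a * (L / Δmin i) + 2 * a * M * Δmin i := by
        field_simp
      have h3 : 2 * a * M * Δmin i ≤ 2 * a * M := by
        have : 2 * a * M * Δmin i ≤ 2 * a * M * 1 :=
          mul_le_mul_of_nonneg_left (hΔmin1 i) (by positivity)
        linarith
      linarith
    have step3 : 2 * a * (L / Δmin i) ≤ 4 * a * (1 / M) * S i := by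
      have hfilter : Finset.univ.filter (fun p => 0 < Δ i p) = Finset.univ := by
        apply Finset.filter_true_of_mem
        intro p _
        exact lt_of_lt_of_le hd (hΔminle i p)
      have hterm : ∀ p : Fin M, L / (2 * Δmin i) ≤ L / Δ i p := by
        intro p
        exact div_le_div_of_nonneg_left hL (lt_of_lt_of_le hd (hΔminle i p)) (h2 i hi p)
      have hsum : (M : ℝ) * (L / (2 * Δmin i)) ≤ S i := by
        rw [hSdef]
        simp only [hfilter]
        calc (M : ℝ) * (L / (2 * Δmin i)) = ∑ _p : Fin M, L / (2 * Δmin i) := by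
              rw [Finset.sum_const, Finset.card_univ, Fintype.card_fin, nsmul_eq_mul]
          _ ≤ ∑ p, L / Δ i p := Finset.sum_le_sum fun p _ => hterm p
      have : 2 * a * (L / Δmin i) = 4 * a * (1 / M) * ((M : ℝ) * (L / (2 * Δmin i))) := by
        field_simp
        ring
      rw [this]
      apply mul_le_mul_of_nonneg_left hsum (by positivity)
    linarith
  have hnsubbound : ∀ i ∉ Iα, ∑ p, n i p * Δ i p ≤ a * S i + a * C * M := by
    intro i hi
    have hsplit : ∑ p, n i p * Δ i p
        = ∑ p ∈ Finset.univ.filter (fun p => 0 < Δ i p), n i p * Δ i p := by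
      symm
      apply Finset.sum_subset (Finset.filter_subset _ _)
      intro p _ hp
      simp only [Finset.mem_filter, Finset.mem_univ, true_and, not_lt] at hp
      have : Δ i p = 0 := le_antisymm hp (hΔnn i p)
      rw [this, mul_zero]
    rw [hsplit]
    have step : ∑ p ∈ Finset.univ.filter (fun p => 0 < Δ i p), n i p * Δ i p ≤
        ∑ p ∈ Finset.univ.filter (fun p => 0 < Δ i p), (a * (L / Δ i p) + a * C) := by
      apply Finset.sum_le_sum
      intro p hp
      simp only [Finset.mem_filter, Finset.mem_univ, true_and] at hp
      have h1 : n i p * Δ i p ≤ a * (L / (Δ i p) ^ 2 + C) * Δ i p :=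
        mul_le_mul_of_nonneg_right (hnsub i hi p hp) (hΔnn i p)
      have h2' : a * (L / (Δ i p) ^ 2 + C) * Δ i p = a * (L / Δ i p) + a * C * Δ i p := by
        field_simp
      have h3 : a * C * Δ i p ≤ a * C := by
        have : a * C * Δ i p ≤ a * C * 1 :=
          mul_le_mul_of_nonneg_left (hΔ1 i p) (by positivity)
        linarith
      linarith
    rw [Finset.sum_add_distrib, Finset.sum_const, ← Finset.mul_sum, nsmul_eq_mul] at step
    have hcard : ((Finset.univ.filter (fun p => 0 < Δ i p)).card : ℝ) ≤ M := by
      calc ((Finset.univ.filter (fun p => 0 < Δ i p)).card : ℝ)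
          ≤ (Finset.univ : Finset (Fin M)).card := by
            exact_mod_cast Finset.card_le_card (Finset.filter_subset _ _)
        _ = M := by rw [Finset.card_univ, Fintype.card_fin]
    have hcc : ((Finset.univ.filter (fun p => 0 < Δ i p)).card : ℝ) * (a * C) ≤ a * C * M := by
      calc ((Finset.univ.filter (fun p => 0 < Δ i p)).card : ℝ) * (a * C)
          ≤ (M : ℝ) * (a * C) := mul_le_mul_of_nonneg_right hcard (by positivity)
        _ = a * C * M := by ring
    rw [hSdef]
    dsimp only
    linarith
  -- combine
  have hsplit : ∑ i, ∑ p, n i p * Δ i p =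
      (∑ i ∈ Iα, ∑ p, n i p * Δ i p) + ∑ i ∈ Iαᶜ, ∑ p, n i p * Δ i p :=
    (Finset.sum_add_sum_compl Iα _).symm
  have hbound1 : ∑ i ∈ Iα, ∑ p, n i p * Δ i p ≤
      4 * a * (1 / M) * (∑ i ∈ Iα, S i) + 2 * a * M * Iα.card := by
    calc ∑ i ∈ Iα, ∑ p, n i p * Δ i p
        ≤ ∑ i ∈ Iα, (4 * a * (1 / M) * S i + 2 * a * M) :=
          Finset.sum_le_sum fun i hi => hsubbound i hi
      _ = 4 * a * (1 / M) * (∑ i ∈ Iα, S i) + 2 * a * M * Iα.card := by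
          rw [Finset.sum_add_distrib, ← Finset.mul_sum, Finset.sum_const, nsmul_eq_mul]
          ring
  have hbound2 : ∑ i ∈ Iαᶜ, ∑ p, n i p * Δ i p ≤
      a * (∑ i ∈ Iαᶜ, S i) + a * C * M * Iαᶜ.card := by
    calc ∑ i ∈ Iαᶜ, ∑ p, n i p * Δ i p
        ≤ ∑ i ∈ Iαᶜ, (a * S i + a * C * M) :=
          Finset.sum_le_sum fun i hi => hnsubbound i (Finset.mem_compl.mp hi)
      _ = a * (∑ i ∈ Iαᶜ, S i) + a * C * M * Iαᶜ.card := by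
          rw [Finset.sum_add_distrib, ← Finset.mul_sum, Finset.sum_const, nsmul_eq_mul]
          ring
  have hcard1 : (Iα.card : ℝ) ≤ K := by
    exact_mod_cast (Finset.card_le_card (Finset.subset_univ Iα)).trans_eq
      (by rw [Finset.card_univ, Fintype.card_fin])
  have hcard2 : (Iαᶜ.card : ℝ) ≤ K := by
    exact_mod_cast (Finset.card_le_card (Finset.subset_univ Iαᶜ)).trans_eq
      (by rw [Finset.card_univ, Fintype.card_fin])
  have hS1 : 0 ≤ ∑ i ∈ Iα, S i := Finset.sum_nonneg fun i _ => hSnn i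
  have hS2 : 0 ≤ ∑ i ∈ Iαᶜ, S i := Finset.sum_nonneg fun i _ => hSnn i
  have hMK : (0:ℝ) ≤ (M:ℝ) := le_of_lt hMpos
  rw [hsplit]
  have h1 : 2 * a * M * (Iα.card : ℝ) ≤ 2 * a * (M : ℝ) * K :=
    mul_le_mul_of_nonneg_left hcard1 (by positivity)
  have h2' : a * C * M * (Iαᶜ.card : ℝ) ≤ a * C * (M : ℝ) * K :=
    mul_le_mul_of_nonneg_left hcard2 (by positivity)
  have hS2' : a * (∑ i ∈ Iαᶜ, S i) ≤ 4 * a * (∑ i ∈ Iαᶜ, S i) := by nlinarith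
  have hfinal : 2 * a * (M:ℝ) * K + a * C * (M:ℝ) * K ≤ 4 * a * ((M:ℝ) * K * (1 + C)) := by
    have hK0 : (0:ℝ) ≤ (K:ℝ) := Nat.cast_nonneg K
    nlinarith [mul_nonneg (mul_nonneg ha0 hMK) hK0,
      mul_nonneg (mul_nonneg (mul_nonneg ha0 hC) hMK) hK0]
  calc (∑ i ∈ Iα, ∑ p, n i p * Δ i p) + ∑ i ∈ Iαᶜ, ∑ p, n i p * Δ i p
      ≤ (4 * a * (1 / M) * (∑ i ∈ Iα, S i) + 2 * a * M * Iα.card)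
        + (a * (∑ i ∈ Iαᶜ, S i) + a * C * M * Iαᶜ.card) := add_le_add hbound1 hbound2
    _ ≤ 4 * a * ((1 / (M : ℝ)) * (∑ i ∈ Iα, S i) + (∑ i ∈ Iαᶜ, S i)
        + (M : ℝ) * K * (1 + C)) := by nlinarith
    _ = 4 * a * ((1 / (M : ℝ)) *
          ∑ i ∈ Iα, ∑ p ∈ Finset.univ.filter (fun p => 0 < Δ i p), L / Δ i p
        + ∑ i ∈ Iαᶜ, ∑ p ∈ Finset.univ.filter (fun p => 0 < Δ i p), L / Δ i p
        + (M : ℝ) * K * (1 + C)) := by rw [hSdef]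
end

section
/- There is a universal constant c > 0 with the following property. Let α > 0, let T ≥ 2 be an integer, let a ≥ 1, C ≥ 0 and P ≥ 0 be reals, and assume Δ_i^p ≤ 2·Δ_i^min for every arm i ∈ I_α and every player p. Let n : Fin K → Fin M → ℝ be nonnegative with Σ_{i ∈ [K]} Σ_{p ∈ [M]} n_i^p ≤ P, satisfying: (i) Σ_{p ∈ [M]} n_i^p ≤ a·( ln T/(Δ_i^min)² + M ) for every i ∈ I_α; and (ii) n_i^p ≤ a·( ln T/(Δ_i^p)² + C ) for every i ∈ I_α^C and every p with Δ_i^p > 0. Then Σ_{i ∈ [K]} Σ_{p ∈ [M]} n_i^p · Δ_i^p ≤ c·( √( a·|I_α|·P·ln T ) + √( a·M·(|I_α^C| − 1)·P·ln T ) + a·M·K·(1+C) ), where |I_α^C| ≥ 1 so that |I_α^C| − 1 ≥ 0. -/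
lemma key_ineq {s d L B : ℝ} (hs : 0 ≤ s) (hd : 0 < d) (hL : 0 ≤ L) (hB : 0 ≤ B)
    (h : s ≤ L / d ^ 2 + B) : s * d ≤ Real.sqrt (s * L) + B * d := by
  have hr : 0 ≤ Real.sqrt (s * L) := Real.sqrt_nonneg _
  have hr2 : Real.sqrt (s * L) ^ 2 = s * L := Real.sq_sqrt (mul_nonneg hs hL)
  have hd2 : s * d ^ 2 ≤ L + B * d ^ 2 := by
    have h3 : (L / d ^ 2) * d ^ 2 = L := by field_simp
    nlinarith [sq_nonneg d]
  rcases le_or_gt s B with hc | hc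
  · nlinarith
  · nlinarith [sq_nonneg (Real.sqrt (s * L) - (s - B) * d), sq_nonneg ((s - B) * d)]

lemma sum_sqrt_le {ι : Type*} (S : Finset ι) (f : ι → ℝ) (hf : ∀ i ∈ S, 0 ≤ f i) :
    ∑ i ∈ S, Real.sqrt (f i) ≤ Real.sqrt (S.card * ∑ i ∈ S, f i) := by
  have h1 : (∑ i ∈ S, Real.sqrt (f i)) ^ 2 ≤ S.card * ∑ i ∈ S, Real.sqrt (f i) ^ 2 :=
    sq_sum_le_card_mul_sum_sq
  have h2 : ∑ i ∈ S, Real.sqrt (f i) ^ 2 = ∑ i ∈ S, f i :=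
    Finset.sum_congr rfl fun i hi => Real.sq_sqrt (hf i hi)
  rw [Real.le_sqrt (Finset.sum_nonneg fun i _ => Real.sqrt_nonneg _)
    (mul_nonneg (Nat.cast_nonneg _) (Finset.sum_nonneg hf))]
  rw [← h2]; exact h1

/-- Gap-independent part of the paper's Lemma C.8 (lem:arm-pull-reg): per-arm
expected pull-count bounds imply the gap-independent collective regret bound. -/
theorem stmt_19 : ∃ c : ℝ, 0 < c ∧
    ∀ (M K : ℕ), 1 ≤ M → 1 ≤ K →
    ∀ ε : ℝ, 0 ≤ ε →
    ∀ μ : Fin K → Fin M → ℝ,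
      (∀ i p q, |μ i p - μ i q| ≤ ε) →
      (∀ i p, 0 ≤ μ i p) → (∀ i p, μ i p ≤ 1) →
    ∀ Δ : Fin K → Fin M → ℝ, (∀ i p, Δ i p = (⨆ j, μ j p) - μ i p) →
    ∀ Δmin : Fin K → ℝ, (∀ i, Δmin i = ⨅ p, Δ i p) →
    ∀ α : ℝ, 0 < α →
    ∀ Iα : Finset (Fin K), (∀ i, i ∈ Iα ↔ ∃ p, α < Δ i p) →
    ∀ T : ℕ, 2 ≤ T →
    ∀ a C P : ℝ, 1 ≤ a → 0 ≤ C → 0 ≤ P →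
    (∀ i ∈ Iα, ∀ p, Δ i p ≤ 2 * Δmin i) →
    1 ≤ (Iαᶜ).card →
    ∀ n : Fin K → Fin M → ℝ, (∀ i p, 0 ≤ n i p) →
    (∑ i, ∑ p, n i p ≤ P) →
    (∀ i ∈ Iα, ∑ p, n i p ≤ a * (Real.log T / (Δmin i) ^ 2 + M)) →
    (∀ i ∉ Iα, ∀ p, 0 < Δ i p → n i p ≤ a * (Real.log T / (Δ i p) ^ 2 + C)) →
    ∑ i, ∑ p, n i p * Δ i p ≤
      c * (Real.sqrt (a * Iα.card * P * Real.log T)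
        + Real.sqrt (a * (M : ℝ) * ((Iαᶜ).card - 1) * P * Real.log T)
        + a * (M : ℝ) * K * (1 + C)) := by
  refine ⟨2, by norm_num, ?_⟩
  intro M K hM hK ε hε μ hμdis hμ0 hμ1 Δ hΔ Δmin hΔmin α hα Iα hIα T hT a C P ha hC hP
    hΔ2 hcard n hn hnP hn1 hn2
  haveI : Nonempty (Fin M) := Fin.pos_iff_nonempty.mp hM
  haveI : Nonempty (Fin K) := Fin.pos_iff_nonempty.mp hK
  have hlog : 0 ≤ Real.log T := Real.log_nonneg (by exact_mod_cast le_trans one_le_two hT)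
  set L := a * Real.log T with hLdef
  have hL : 0 ≤ L := mul_nonneg (by linarith) hlog
  have hΔ0 : ∀ i p, 0 ≤ Δ i p := by
    intro i p
    rw [hΔ]
    have := le_ciSup (Set.Finite.bddAbove (Set.finite_range (fun j => μ j p))) i
    linarith
  have hΔ1 : ∀ i p, Δ i p ≤ 1 := by
    intro i p
    rw [hΔ]
    have h1 : (⨆ j, μ j p) ≤ 1 := ciSup_le fun j => hμ1 j p
    have := hμ0 i p; linarith
  have hmle : ∀ i p, Δmin i ≤ Δ i p := by
    intro i p
    rw [hΔmin]
    exact ciInf_le (Set.Finite.bddBelow (Set.finite_range _)) p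
  have hm1 : ∀ i, Δmin i ≤ 1 := fun i =>
    le_trans (hmle i (Classical.arbitrary _)) (hΔ1 i _)
  have hmpos : ∀ i ∈ Iα, 0 < Δmin i := by
    intro i hi
    obtain ⟨q, hq⟩ := (hIα i).1 hi
    have := hΔ2 i hi q; linarith
  have hopt : ∀ p, ∃ i, i ∉ Iα ∧ Δ i p = 0 := by
    intro p
    obtain ⟨i, hi⟩ := exists_eq_ciSup_of_finite (f := fun j => μ j p)
    have hz : Δ i p = 0 := by rw [hΔ, ← hi]; ring
    refine ⟨i, ?_, hz⟩
    intro hmem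
    obtain ⟨q, hq⟩ := (hIα i).1 hmem
    have h2 := hΔ2 i hmem q
    have h3 := hmle i p
    linarith
  -- abbreviations
  set s : Fin K → ℝ := fun i => ∑ p, n i p with hsdef
  have hs0 : ∀ i, 0 ≤ s i := fun i => Finset.sum_nonneg fun p _ => hn i p
  have hsP : ∑ i ∈ Iα, s i ≤ P :=
    le_trans (Finset.sum_le_sum_of_subset_of_nonneg (Finset.subset_univ _)
      (fun i _ _ => hs0 i)) hnP
  -- Part 1 : subpar arms
  have part1 : ∑ i ∈ Iα, ∑ p, n i p * Δ i p ≤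
      2 * Real.sqrt ((Iα.card : ℝ) * (P * L)) + 2 * (a * M) * Iα.card := by
    have step : ∀ i ∈ Iα, ∑ p, n i p * Δ i p ≤ 2 * Real.sqrt (s i * L) + 2 * (a * M) := by
      intro i hi
      have h1 : ∑ p, n i p * Δ i p ≤ 2 * (s i * Δmin i) := by
        calc ∑ p, n i p * Δ i p ≤ ∑ p, n i p * (2 * Δmin i) :=
              Finset.sum_le_sum fun p _ => mul_le_mul_of_nonneg_left (hΔ2 i hi p) (hn i p)
          _ = 2 * (s i * Δmin i) := by rw [← Finset.sum_mul]; ring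
      have hbound : s i ≤ L / (Δmin i) ^ 2 + a * M := by
        have h4 := hn1 i hi
        have h5 : a * (Real.log T / (Δmin i) ^ 2 + M) = L / (Δmin i) ^ 2 + a * M := by
          rw [hLdef]; ring
        linarith [h4, h5]
      have h2 : s i * Δmin i ≤ Real.sqrt (s i * L) + (a * M) * Δmin i :=
        key_ineq (hs0 i) (hmpos i hi) hL (by positivity) hbound
      have h3 : (a * M) * Δmin i ≤ a * M := by
        nlinarith [hm1 i, hmpos i hi, (by positivity : (0:ℝ) ≤ a * M)]
      linarith
    calc ∑ i ∈ Iα, ∑ p, n i p * Δ i p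
        ≤ ∑ i ∈ Iα, (2 * Real.sqrt (s i * L) + 2 * (a * M)) := Finset.sum_le_sum step
      _ = 2 * (∑ i ∈ Iα, Real.sqrt (s i * L)) + 2 * (a * M) * Iα.card := by
          rw [Finset.sum_add_distrib, Finset.mul_sum, Finset.sum_const, nsmul_eq_mul]; ring
      _ ≤ 2 * Real.sqrt ((Iα.card : ℝ) * ∑ i ∈ Iα, (s i * L)) + 2 * (a * M) * Iα.card := by
          have := sum_sqrt_le Iα (fun i => s i * L) (fun i _ => mul_nonneg (hs0 i) hL)
          linarith
      _ ≤ 2 * Real.sqrt ((Iα.card : ℝ) * (P * L)) + 2 * (a * M) * Iα.card := by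
          have h6 : ∑ i ∈ Iα, (s i * L) = (∑ i ∈ Iα, s i) * L := (Finset.sum_mul _ _ _).symm
          have h7 : (Iα.card : ℝ) * ∑ i ∈ Iα, (s i * L) ≤ (Iα.card : ℝ) * (P * L) := by
            rw [h6]
            exact mul_le_mul_of_nonneg_left (mul_le_mul_of_nonneg_right hsP hL)
              (Nat.cast_nonneg _)
          have := Real.sqrt_le_sqrt h7
          linarith
  -- Part 2 : non-subpar arms
  set S : Fin M → Finset (Fin K) := fun p => (Iαᶜ).filter (fun i => 0 < Δ i p) with hSdef
  set t : Fin M → ℝ := fun p => ∑ i ∈ S p, n i p with htdef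
  have ht0 : ∀ p, 0 ≤ t p := fun p => Finset.sum_nonneg fun i _ => hn i p
  have htP : ∑ p, t p ≤ P := by
    have h1 : ∀ p, t p ≤ ∑ i, n i p := fun p =>
      Finset.sum_le_sum_of_subset_of_nonneg (Finset.subset_univ _) (fun i _ _ => hn i p)
    calc ∑ p, t p ≤ ∑ p, ∑ i, n i p := Finset.sum_le_sum fun p _ => h1 p
      _ = ∑ i, ∑ p, n i p := Finset.sum_comm
      _ ≤ P := hnP
  have hScard : ∀ p, ((S p).card : ℝ) ≤ ((Iαᶜ).card : ℝ) - 1 := by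
    intro p
    obtain ⟨i0, hi0, hz⟩ := hopt p
    have hi0c : i0 ∈ Iαᶜ := Finset.mem_compl.mpr hi0
    have hsub : S p ⊆ (Iαᶜ).erase i0 := by
      intro x hx
      obtain ⟨hx1, hx2⟩ := Finset.mem_filter.mp hx
      refine Finset.mem_erase.mpr ⟨?_, hx1⟩
      rintro rfl
      exact absurd (hz ▸ hx2) (lt_irrefl 0)
    have h1 : (S p).card ≤ (Iαᶜ).card - 1 := by
      calc (S p).card ≤ ((Iαᶜ).erase i0).card := Finset.card_le_card hsub
        _ = (Iαᶜ).card - 1 := Finset.card_erase_of_mem hi0c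
    rw [show ((Iαᶜ).card : ℝ) - 1 = (((Iαᶜ).card - 1 : ℕ) : ℝ) from by
      rw [Nat.cast_sub hcard]; norm_num]
    exact_mod_cast h1
  have hcard1 : (0:ℝ) ≤ ((Iαᶜ).card : ℝ) - 1 := by
    have : (1:ℝ) ≤ ((Iαᶜ).card : ℝ) := by exact_mod_cast hcard
    linarith
  have part2 : ∑ i ∈ Iαᶜ, ∑ p, n i p * Δ i p ≤
      Real.sqrt ((M : ℝ) * ((((Iαᶜ).card : ℝ) - 1) * (P * L))) + (M : ℝ) * ((K : ℝ) * (a * C)) := by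
    have hswap : ∑ i ∈ Iαᶜ, ∑ p, n i p * Δ i p = ∑ p, ∑ i ∈ Iαᶜ, n i p * Δ i p :=
      Finset.sum_comm
    have hfilt : ∀ p, ∑ i ∈ S p, n i p * Δ i p = ∑ i ∈ Iαᶜ, n i p * Δ i p := by
      intro p
      refine Finset.sum_filter_of_ne fun i _ hne => ?_
      have : Δ i p ≠ 0 := fun h => hne (by rw [h, mul_zero])
      exact lt_of_le_of_ne (hΔ0 i p) (Ne.symm this)
    have hperp : ∀ p : Fin M, ∑ i ∈ S p, n i p * Δ i p ≤
        Real.sqrt ((((Iαᶜ).card : ℝ) - 1) * (L * t p)) + (K : ℝ) * (a * C) := by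
      intro p
      have hpair : ∀ i ∈ S p, n i p * Δ i p ≤ Real.sqrt (n i p * L) + a * C := by
        intro i hi
        obtain ⟨hi1, hi2⟩ := Finset.mem_filter.mp hi
        have hni : i ∉ Iα := Finset.mem_compl.mp hi1
        have hb := hn2 i hni p hi2
        have h5 : a * (Real.log T / (Δ i p) ^ 2 + C) = L / (Δ i p) ^ 2 + a * C := by
          rw [hLdef]; ring
        have hkey : n i p * Δ i p ≤ Real.sqrt (n i p * L) + (a * C) * Δ i p :=
          key_ineq (hn i p) hi2 hL (by positivity) (by linarith [hb, h5])
        have : (a * C) * Δ i p ≤ a * C := by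
          nlinarith [hΔ1 i p, hi2, (by positivity : (0:ℝ) ≤ a * C)]
        linarith
      have hKcard : ((S p).card : ℝ) ≤ (K : ℝ) := by
        exact_mod_cast (Finset.card_le_univ (S p)).trans_eq (by simp)
      calc ∑ i ∈ S p, n i p * Δ i p
          ≤ ∑ i ∈ S p, (Real.sqrt (n i p * L) + a * C) := Finset.sum_le_sum hpair
        _ = (∑ i ∈ S p, Real.sqrt (n i p * L)) + (S p).card * (a * C) := by
            rw [Finset.sum_add_distrib, Finset.sum_const, nsmul_eq_mul]
        _ ≤ Real.sqrt (((S p).card : ℝ) * ∑ i ∈ S p, (n i p * L)) + (K : ℝ) * (a * C) := by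
            have h1 := sum_sqrt_le (S p) (fun i => n i p * L)
              (fun i _ => mul_nonneg (hn i p) hL)
            have h2 : ((S p).card : ℝ) * (a * C) ≤ (K : ℝ) * (a * C) :=
              mul_le_mul_of_nonneg_right hKcard (by positivity)
            linarith
        _ ≤ Real.sqrt ((((Iαᶜ).card : ℝ) - 1) * (L * t p)) + (K : ℝ) * (a * C) := by
            have h3 : ∑ i ∈ S p, (n i p * L) = L * t p := by
              rw [htdef]; rw [Finset.mul_sum]
              exact Finset.sum_congr rfl fun i _ => mul_comm _ _
            have h4 : ((S p).card : ℝ) * ∑ i ∈ S p, (n i p * L) ≤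
                (((Iαᶜ).card : ℝ) - 1) * (L * t p) := by
              rw [h3]
              exact mul_le_mul_of_nonneg_right (hScard p)
                (mul_nonneg hL (ht0 p))
            have := Real.sqrt_le_sqrt h4
            linarith
    calc ∑ i ∈ Iαᶜ, ∑ p, n i p * Δ i p
        = ∑ p, ∑ i ∈ S p, n i p * Δ i p := by
          rw [hswap]; exact Finset.sum_congr rfl fun p _ => (hfilt p).symm
      _ ≤ ∑ p, (Real.sqrt ((((Iαᶜ).card : ℝ) - 1) * (L * t p)) + (K : ℝ) * (a * C)) :=
          Finset.sum_le_sum fun p _ => hperp p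
      _ = (∑ p, Real.sqrt ((((Iαᶜ).card : ℝ) - 1) * (L * t p))) + (M : ℝ) * ((K : ℝ) * (a * C)) := by
          rw [Finset.sum_add_distrib, Finset.sum_const, nsmul_eq_mul]; simp
      _ ≤ Real.sqrt ((M : ℝ) * ∑ p, (((Iαᶜ).card : ℝ) - 1) * (L * t p)) + (M : ℝ) * ((K : ℝ) * (a * C)) := by
          have h1 := sum_sqrt_le (Finset.univ : Finset (Fin M))
            (fun p => (((Iαᶜ).card : ℝ) - 1) * (L * t p))
            (fun p _ => mul_nonneg hcard1 (mul_nonneg hL (ht0 p)))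
          simp only [Finset.card_univ, Fintype.card_fin] at h1
          linarith
      _ ≤ Real.sqrt ((M : ℝ) * ((((Iαᶜ).card : ℝ) - 1) * (P * L))) + (M : ℝ) * ((K : ℝ) * (a * C)) := by
          have h2 : ∑ p, (((Iαᶜ).card : ℝ) - 1) * (L * t p) =
              (((Iαᶜ).card : ℝ) - 1) * (L * ∑ p, t p) := by
            simp only [Finset.mul_sum]
          have h3 : (M : ℝ) * ∑ p, (((Iαᶜ).card : ℝ) - 1) * (L * t p) ≤
              (M : ℝ) * ((((Iαᶜ).card : ℝ) - 1) * (P * L)) := by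
            rw [h2]
            have : (((Iαᶜ).card : ℝ) - 1) * (L * ∑ p, t p) ≤
                (((Iαᶜ).card : ℝ) - 1) * (P * L) := by
              apply mul_le_mul_of_nonneg_left _ hcard1
              rw [mul_comm P L]
              exact mul_le_mul_of_nonneg_left htP hL
            exact mul_le_mul_of_nonneg_left this (Nat.cast_nonneg _)
          have := Real.sqrt_le_sqrt h3
          linarith
  -- assemble
  have hsplit : ∑ i, ∑ p, n i p * Δ i p =
      (∑ i ∈ Iα, ∑ p, n i p * Δ i p) + ∑ i ∈ Iαᶜ, ∑ p, n i p * Δ i p :=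
    (Finset.sum_add_sum_compl Iα _).symm
  have hA : Real.sqrt ((Iα.card : ℝ) * (P * L)) =
      Real.sqrt (a * Iα.card * P * Real.log T) := by
    congr 1; rw [hLdef]; ring
  have hB : Real.sqrt ((M : ℝ) * ((((Iαᶜ).card : ℝ) - 1) * (P * L))) =
      Real.sqrt (a * (M : ℝ) * (((Iαᶜ).card : ℝ) - 1) * P * Real.log T) := by
    congr 1; rw [hLdef]; ring
  have hIK : (Iα.card : ℝ) ≤ (K : ℝ) := by
    exact_mod_cast (Finset.card_le_univ Iα).trans_eq (by simp)
  have hMr : (1:ℝ) ≤ (M:ℝ) := by exact_mod_cast hM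
  have hKr : (1:ℝ) ≤ (K:ℝ) := by exact_mod_cast hK
  have hsqA : 0 ≤ Real.sqrt (a * Iα.card * P * Real.log T) := Real.sqrt_nonneg _
  have hsqB : 0 ≤ Real.sqrt (a * (M : ℝ) * (((Iαᶜ).card : ℝ) - 1) * P * Real.log T) :=
    Real.sqrt_nonneg _
  rw [hsplit]
  rw [hA] at part1
  rw [hB] at part2
  nlinarith [mul_le_mul_of_nonneg_left hIK (by positivity : (0:ℝ) ≤ 2 * (a * M)),
    (by positivity : (0:ℝ) ≤ a * M * K)]
end
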